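/- arXiv:2408.10660 — 5 statements merged into one kernel-verified Lean document; each statement's English description precedes it below -/
import Mathlib

section
/- Let g be a characteristically nilpotent finite-dimensional real Lie algebra. Then the only ℤ-grading of g is the trivial one: if g = ⨁_{i∈ℤ} g_i with [g_i, g_j] ⊆ g_{i+j}, then g = g_0 and g_i = 0 for all i ≠ 0. -/
/-- A characteristically nilpotent finite-dimensional real Lie algebra admits only the
trivial ℤ-grading: if `g = ⨁_{i∈ℤ} g_i` with `[g_i, g_j] ⊆ g_{i+j}`, then `g = g_0` and
`g_i = 0` for `i ≠ 0`. -/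
theorem char_nilpotent_only_trivial_grading
    (L : Type*) [LieRing L] [LieAlgebra ℝ L] [FiniteDimensional ℝ L]
    (hCN : ∀ D : LieDerivation ℝ L L, IsNilpotent D.toLinearMap)
    (g : ℤ → Submodule ℝ L)
    (hdirect : DirectSum.IsInternal g)
    (hgrade : ∀ i j : ℤ, ∀ x ∈ g i, ∀ y ∈ g j, ⁅x, y⁆ ∈ g (i + j)) :
    g 0 = ⊤ ∧ ∀ i : ℤ, i ≠ 0 → g i = ⊥ := by
  classical
  set e : (DirectSum ℤ fun i => g i) ≃ₗ[ℝ] L := LinearEquiv.ofBijective (DirectSum.coeLinearMap g) hdirect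
    with he
  set D' : (DirectSum ℤ fun i => g i) →ₗ[ℝ] (DirectSum ℤ fun i => g i) :=
    DirectSum.toModule ℝ ℤ _ (fun i => (DirectSum.lof ℝ ℤ (fun i => g i) i).comp
      ((i : ℝ) • LinearMap.id)) with hD'
  set D : L →ₗ[ℝ] L := e.toLinearMap ∘ₗ D' ∘ₗ e.symm.toLinearMap with hD
  have hsup : (⨆ i, g i) = ⊤ := hdirect.submodule_iSup_eq_top
  have key : ∀ i : ℤ, ∀ x ∈ g i, D x = (i : ℝ) • x := by
    intro i x hx
    have h1 : e (DirectSum.lof ℝ ℤ (fun i => g i) i ⟨x, hx⟩) = x := by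
      simp [he, LinearEquiv.ofBijective_apply, DirectSum.lof_eq_of,
        DirectSum.coeLinearMap_of]
      exact DirectSum.coeLinearMap_of g i _
    have h2 : e.symm x = DirectSum.lof ℝ ℤ (fun i => g i) i ⟨x, hx⟩ :=
      e.symm_apply_eq.mpr h1.symm
    rw [hD, LinearMap.comp_apply, LinearMap.comp_apply, LinearEquiv.coe_coe,
      LinearEquiv.coe_coe, h2, hD', DirectSum.toModule_lof]
    simp [he, LinearEquiv.ofBijective_apply, DirectSum.lof_eq_of,
      DirectSum.coeLinearMap_of]
    exact DirectSum.coeLinearMap_of g i _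
  -- D is a derivation
  have leib : ∀ x y : L, D ⁅x, y⁆ = ⁅x, D y⁆ - ⁅y, D x⁆ := by
    intro x y
    have hx : x ∈ ⨆ i, g i := hsup ▸ Submodule.mem_top
    induction hx using Submodule.iSup_induction' with
    | mem i x hx =>
      have hy : y ∈ ⨆ j, g j := hsup ▸ Submodule.mem_top
      induction hy using Submodule.iSup_induction' with
      | mem j y hy =>
        have hs : ⁅y, x⁆ = -⁅x, y⁆ := by rw [← lie_skew x y, neg_neg]
        rw [key i x hx, key j y hy, key (i + j) _ (hgrade i j x hx y hy),
          lie_smul, lie_smul, hs]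
        push_cast
        rw [add_smul, smul_neg, sub_neg_eq_add, add_comm]
      | zero => simp
      | add y z hy hz ihy ihz =>
        rw [lie_add, map_add, ihy, ihz, map_add, lie_add, add_lie]
        abel
    | zero => simp
    | add x z hx hz ihx ihz =>
      rw [add_lie, map_add, ihx, ihz, map_add, lie_add, add_lie]
      abel
  set DD : LieDerivation ℝ L L := ⟨D, leib⟩ with hDD
  obtain ⟨n, hn⟩ := hCN DD
  have hpow : ∀ m : ℕ, ∀ i : ℤ, ∀ x ∈ g i, (D ^ m) x = ((i : ℝ)) ^ m • x := by
    intro m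
    induction m with
    | zero => intro i x hx; simp
    | succ m ih =>
      intro i x hx
      rw [pow_succ, Module.End.mul_apply, key i x hx, map_smul, ih i x hx,
        smul_smul, pow_succ]
      ring_nf
  have hbot : ∀ i : ℤ, i ≠ 0 → g i = ⊥ := by
    intro i hi
    rw [Submodule.eq_bot_iff]
    intro x hx
    have : (D ^ n) x = ((i : ℝ)) ^ n • x := hpow n i x hx
    have hDn : (D ^ n) x = 0 := by
      have : DD.toLinearMap = D := rfl
      rw [← this] at *
      rw [hn]; simp
    rw [hDn] at this
    have hne : ((i : ℝ)) ^ n ≠ 0 := by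
      apply pow_ne_zero
      exact_mod_cast hi
    have := this.symm
    exact (smul_eq_zero.mp this).resolve_left hne
  refine ⟨?_, hbot⟩
  rw [← top_le_iff, ← hsup]
  apply iSup_le
  intro i
  by_cases hi : i = 0
  · subst hi; exact le_rfl
  · rw [hbot i hi]; exact bot_le
end

section
/- For all real α, β, the center of the 11-dimensional Lie algebra g(α,β) is the one-dimensional span of e_11. -/
noncomputable section

/-- The basis vector `e k` (1-based) of `ℝ^n`; equals `0` if `k > n`. -/
def ee (n k : ℕ) : Fin n → ℝ := fun m => if (m : ℕ) + 1 = k then 1 else 0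

/-- Structure constants of the Lie algebra `g(α,β)` of Burde–van Velthoven for `i < j`
(1-based indices): `cc n α β i j` is the bracket `[e_i, e_j]`. All brackets not listed
here (and not determined by skew-symmetry and bilinearity) are zero. Taking `n = 11`
gives `g(α,β)`; taking `n = 10` gives the quotient `g(α,β)/ℝe₁₁` (all `e₁₁`-components
vanish automatically since `ee 10 11 = 0`). -/
def cc (n : ℕ) (α β : ℝ) : ℕ → ℕ → Fin n → ℝ
  | 1, j => if 2 ≤ j ∧ j ≤ 10 then ee n (j + 1) else 0
  | 2, 3 => ee n 5 + α • ee n 6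
  | 2, 4 => ee n 6 + α • ee n 7
  | 2, 5 => -ee n 7 + (α - β) • ee n 8
  | 2, 6 => (-3 : ℝ) • ee n 8 + (α - 2 * β) • ee n 9
  | 2, 7 => (-2 : ℝ) • ee n 9 - ((5 * α + 7 * β) / 4) • ee n 10
              + ((27 * α ^ 2 + 12 * α * β + β ^ 2) / 16) • ee n 11
  | 2, 8 => (2 : ℝ) • ee n 10 - ((23 * α + β) / 4) • ee n 11
  | 2, 9 => -ee n 11
  | 3, 4 => (2 : ℝ) • ee n 7 + β • ee n 8
  | 3, 5 => (2 : ℝ) • ee n 8 + β • ee n 9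
  | 3, 6 => -ee n 9 + ((9 * α - β) / 4) • ee n 10
              - ((27 * α ^ 2 + 12 * α * β + β ^ 2) / 16) • ee n 11
  | 3, 7 => (-4 : ℝ) • ee n 10 + (3 * (3 * α - β) / 2) • ee n 11
  | 3, 8 => (3 : ℝ) • ee n 11
  | 4, 5 => (3 : ℝ) • ee n 9 - ((9 * α - 5 * β) / 4) • ee n 10
              + ((27 * α ^ 2 + 12 * α * β + β ^ 2) / 16) • ee n 11
  | 4, 6 => (3 : ℝ) • ee n 10 - ((9 * α - 5 * β) / 4) • ee n 11
  | 4, 7 => (-7 : ℝ) • ee n 11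
  | 5, 6 => (10 : ℝ) • ee n 11
  | _, _ => 0

/-- Full (skew-symmetrized) structure constants: `sc n α β i j = [e_{i+1}, e_{j+1}]`
for `i j : Fin n` (0-based). -/
def sc (n : ℕ) (α β : ℝ) (i j : Fin n) : Fin n → ℝ :=
  cc n α β ((i : ℕ) + 1) ((j : ℕ) + 1) - cc n α β ((j : ℕ) + 1) ((i : ℕ) + 1)

/-- The bilinear bracket on `ℝ^n` determined by the structure constants of `g(α,β)`. -/
def br (n : ℕ) (α β : ℝ) (x y : Fin n → ℝ) : Fin n → ℝ :=
  ∑ i : Fin n, ∑ j : Fin n, (x i * y j) • sc n α β i j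

lemma sum11 {M : Type*} [AddCommMonoid M] (f : Fin 11 → M) :
    ∑ i, f i = f 0 + (f 1 + (f 2 + (f 3 + (f 4 + (f 5 + (f 6 + (f 7 + (f 8 + (f 9 + f 10))))))))) := by
  simp [Fin.sum_univ_succ]

lemma sc10 (α β : ℝ) (j : Fin 11) : sc 11 α β ⟨10, by norm_num⟩ j = 0 := by
  fin_cases j <;> exact sub_eq_zero_of_eq rfl

lemma br_single (α β : ℝ) (z : Fin 11 → ℝ) (j : Fin 11) :
    br 11 α β z (ee 11 ((j:ℕ)+1)) = ∑ i : Fin 11, z i • sc 11 α β i j := by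
  unfold br
  apply Finset.sum_congr rfl
  intro i _
  rw [Finset.sum_eq_single j]
  · simp [ee]
  · intro b _ hb
    have : (b:ℕ) + 1 ≠ (j:ℕ) + 1 := by
      simpa [Fin.val_eq_val] using hb
    simp [ee, this, Fin.val_inj, hb]
  · simp

/-- For all real `α, β`, the center of `g(α,β)` is the one-dimensional span of `e₁₁`. -/
theorem g_alpha_beta_center (α β : ℝ) (z : Fin 11 → ℝ) :
    (∀ x : Fin 11 → ℝ, br 11 α β z x = 0) ↔ ∃ t : ℝ, z = t • ee 11 11 := by
  constructor
  · intro h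
    have h1 : (∑ i : Fin 11, z i • sc 11 α β i 0) = 0 := by
      have := h (ee 11 (((0 : Fin 11):ℕ)+1))
      rwa [br_single] at this
    have h2 : (∑ i : Fin 11, z i • sc 11 α β i 1) = 0 := by
      have := h (ee 11 (((1 : Fin 11):ℕ)+1))
      rwa [br_single] at this
    rw [sum11] at h1 h2
    rw [show sc 11 α β 0 0 = 0 - 0 from rfl,
        show sc 11 α β 1 0 = 0 - ee 11 3 from rfl,
        show sc 11 α β 2 0 = 0 - ee 11 4 from rfl,
        show sc 11 α β 3 0 = 0 - ee 11 5 from rfl,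
        show sc 11 α β 4 0 = 0 - ee 11 6 from rfl,
        show sc 11 α β 5 0 = 0 - ee 11 7 from rfl,
        show sc 11 α β 6 0 = 0 - ee 11 8 from rfl,
        show sc 11 α β 7 0 = 0 - ee 11 9 from rfl,
        show sc 11 α β 8 0 = 0 - ee 11 10 from rfl,
        show sc 11 α β 9 0 = 0 - ee 11 11 from rfl,
        show sc 11 α β 10 0 = 0 - 0 from rfl] at h1
    have hz1 : z 1 = 0 := by have := congrFun h1 2; simp +decide [ee] at this; linarith
    have hz2 : z 2 = 0 := by have := congrFun h1 3; simp +decide [ee] at this; linarith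
    have hz3 : z 3 = 0 := by have := congrFun h1 4; simp +decide [ee] at this; linarith
    have hz4 : z 4 = 0 := by have := congrFun h1 5; simp +decide [ee] at this; linarith
    have hz5 : z 5 = 0 := by have := congrFun h1 6; simp +decide [ee] at this; linarith
    have hz6 : z 6 = 0 := by have := congrFun h1 7; simp +decide [ee] at this; linarith
    have hz7 : z 7 = 0 := by have := congrFun h1 8; simp +decide [ee] at this; linarith
    have hz8 : z 8 = 0 := by have := congrFun h1 9; simp +decide [ee] at this; linarith
    have hz9 : z 9 = 0 := by have := congrFun h1 10; simp +decide [ee] at this; linarith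
    rw [show sc 11 α β 0 1 = ee 11 3 - 0 from rfl,
        show sc 11 α β 10 1 = 0 - 0 from rfl] at h2
    simp only [hz1, hz2, hz3, hz4, hz5, hz6, hz7, hz8, hz9, zero_smul, add_zero, zero_add,
      sub_zero, sub_self, smul_zero] at h2
    have hz0 : z 0 = 0 := by have := congrFun h2 2; simp +decide [ee] at this; linarith
    refine ⟨z 10, ?_⟩
    funext m
    fin_cases m <;> simp +decide [ee, hz0, hz1, hz2, hz3, hz4, hz5, hz6, hz7, hz8, hz9]
  · rintro ⟨t, rfl⟩ x
    unfold br
    apply Finset.sum_eq_zero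
    intro i _
    apply Finset.sum_eq_zero
    intro j _
    rcases eq_or_ne (i : ℕ) 10 with hi | hi
    · have : i = ⟨10, by norm_num⟩ := Fin.ext hi
      subst this
      rw [sc10]
      simp
    · have hi' : (i : ℕ) + 1 ≠ 11 := by omega
      simp [ee, hi']
end
end

section
/- For all real α, β, and ℓ = e_11* (the functional reading off the e_11-coordinate), the radical g(ℓ) = {y ∈ g(α,β) : ℓ([x,y]) = 0 for all x} equals the span of e_11, i.e. the center of g(α,β). -/
set_option maxHeartbeats 4000000
noncomputable section

/-- For all real `α, β` and `ℓ = e₁₁*`, the radical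
`g(ℓ) = {y : ℓ([x,y]) = 0 for all x}` equals the span of `e₁₁`, the center of `g(α,β)`.
Here `ℓ` reads off the `e₁₁`-coordinate (index `10` in 0-based numbering). -/
theorem g_alpha_beta_flat_orbit (α β : ℝ) (y : Fin 11 → ℝ) :
    (∀ x : Fin 11 → ℝ, br 11 α β x y ⟨10, by norm_num⟩ = 0) ↔
      ∃ t : ℝ, y = t • ee 11 11 := by
  constructor
  · intro h
    have h1 := h (ee 11 1)
    have h2 := h (ee 11 2)
    have h3 := h (ee 11 3)
    have h4 := h (ee 11 4)
    have h5 := h (ee 11 5)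
    have h6 := h (ee 11 6)
    have h7 := h (ee 11 7)
    have h8 := h (ee 11 8)
    have h9 := h (ee 11 9)
    have h10 := h (ee 11 10)
    simp only [br, sc, Fin.sum_univ_succ, Fin.sum_univ_zero] at h1 h2 h3 h4 h5 h6 h7 h8 h9 h10
    norm_num [cc, ee] at h1 h2 h3 h4 h5 h6 h7 h8 h9 h10
    -- convert the hypotheses to numeral-indexed form (definitional equality)
    have H1 : y 9 = 0 := h1
    have H2 : y 6 * ((27 * α ^ 2 + 12 * α * β + β ^ 2) / 16) +
        (-(y 7 * ((23 * α + β) / 4)) + -y 8) = 0 := h2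
    have H3 : -(y 5 * ((27 * α ^ 2 + 12 * α * β + β ^ 2) / 16)) +
        (y 6 * (3 * (3 * α - β) / 2) + y 7 * 3) = 0 := h3
    have H4 : y 4 * ((27 * α ^ 2 + 12 * α * β + β ^ 2) / 16) +
        (-(y 5 * ((9 * α - 5 * β) / 4)) + -(y 6 * 7)) = 0 := h4
    have H5 : -(y 3 * ((27 * α ^ 2 + 12 * α * β + β ^ 2) / 16)) + y 5 * 10 = 0 := h5
    have H6 : y 2 * ((27 * α ^ 2 + 12 * α * β + β ^ 2) / 16) +
        (y 3 * ((9 * α - 5 * β) / 4) + -(y 4 * 10)) = 0 := h6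
    have H7 : -(y 1 * ((27 * α ^ 2 + 12 * α * β + β ^ 2) / 16)) +
        (-(y 2 * (3 * (3 * α - β) / 2)) + y 3 * 7) = 0 := h7
    have H8 : y 1 * ((23 * α + β) / 4) + -(y 2 * 3) = 0 := h8
    have H9 : y 1 = 0 := h9
    have H10 : y 0 = 0 := h10
    have Z2 : y 2 = 0 := by
      linear_combination (-1/3) * H8 + ((23 * α + β) / 12) * H9
    have Z3 : y 3 = 0 := by
      linear_combination (1/7) * H7 + ((27 * α ^ 2 + 12 * α * β + β ^ 2) / 112) * H9
        + (3 * (3 * α - β) / 14) * Z2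
    have Z5 : y 5 = 0 := by
      linear_combination (1/10) * H5 + ((27 * α ^ 2 + 12 * α * β + β ^ 2) / 160) * Z3
    have Z4 : y 4 = 0 := by
      linear_combination (-1/10) * H6 + ((27 * α ^ 2 + 12 * α * β + β ^ 2) / 160) * Z2
        + ((9 * α - 5 * β) / 40) * Z3
    have Z6 : y 6 = 0 := by
      linear_combination (-1/7) * H4 + ((27 * α ^ 2 + 12 * α * β + β ^ 2) / 112) * Z4
        + (-(9 * α - 5 * β) / 28) * Z5
    have Z7 : y 7 = 0 := by
      linear_combination (1/3) * H3 + ((27 * α ^ 2 + 12 * α * β + β ^ 2) / 48) * Z5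
        + (-(3 * (3 * α - β)) / 6) * Z6
    have Z8 : y 8 = 0 := by
      linear_combination (-1) * H2 + ((27 * α ^ 2 + 12 * α * β + β ^ 2) / 16) * Z6
        + (-(23 * α + β) / 4) * Z7
    refine ⟨y 10, funext fun m => ?_⟩
    fin_cases m <;>
      simp only [Pi.smul_apply, ee, smul_eq_mul] <;> norm_num
    · exact H10
    · exact H9
    · exact Z2
    · exact Z3
    · exact Z4
    · exact Z5
    · exact Z6
    · exact Z7
    · exact Z8
    · exact H1
    · rfl
  · rintro ⟨t, rfl⟩ x
    simp only [br, sc, Fin.sum_univ_succ, Fin.sum_univ_zero]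
    norm_num [cc, ee]
end
end

section
/- For the 10-dimensional quotient Lie algebra q(α,β) = g(α,β)/span(e_11) with (α,β) ≠ (0,0), every derivation of q(α,β) is strictly lower-triangular with respect to the induced basis e_1,…,e_10; in particular every derivation of q(α,β) is nilpotent, so q(α,β) is characteristically nilpotent. -/
noncomputable section

set_option maxHeartbeats 1600000
section

def Eb (j : Fin 10) : Fin 10 → ℝ := fun m => if m = j then 1 else 0

lemma sum10 (f : Fin 10 → ℝ) : ∑ i : Fin 10, f i
    = f 0 + f 1 + f 2 + f 3 + f 4 + f 5 + f 6 + f 7 + f 8 + f 9 := by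
  rw [Fin.sum_univ_castSucc (n := 9), Fin.sum_univ_castSucc (n := 8),
    Fin.sum_univ_castSucc (n := 7), Fin.sum_univ_castSucc (n := 6),
    Fin.sum_univ_castSucc (n := 5), Fin.sum_univ_castSucc (n := 4),
    Fin.sum_univ_castSucc (n := 3), Fin.sum_univ_castSucc (n := 2),
    Fin.sum_univ_castSucc (n := 1), Fin.sum_univ_one]
  rfl

/-- For `(α,β) ≠ (0,0)`, every derivation of the 10-dimensional quotient
`q(α,β) = g(α,β)/ℝe₁₁` (whose bracket `br 10 α β` is obtained from that of `g(α,β)` by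
deleting all `e₁₁`-components) is strictly lower-triangular with respect to the basis
`e₁, …, e₁₀`; in particular every derivation is nilpotent, so `q(α,β)` is
characteristically nilpotent. -/
theorem quotient_char_nilpotent (α β : ℝ) (hαβ : (α, β) ≠ (0, 0))
    (D : (Fin 10 → ℝ) →ₗ[ℝ] (Fin 10 → ℝ))
    (hD : ∀ x y : Fin 10 → ℝ, D (br 10 α β x y) = br 10 α β (D x) y + br 10 α β x (D y)) :
    (∀ j i : Fin 10, i ≤ j → D (fun m => if m = j then 1 else 0) i = 0) ∧
      IsNilpotent D := by
  have hEb : ∀ j : Fin 10, (fun i => if j = i then (1:ℝ) else 0) = Eb j := by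
    intro j; funext i; simp [Eb, eq_comm]
  have key : ∀ (x : Fin 10 → ℝ) (m : Fin 10), D x m = ∑ j : Fin 10, x j * D (Eb j) m := by
    intro x m
    conv_lhs => rw [pi_eq_sum_univ x]
    rw [map_sum]; simp [hEb]
  have hbrR : ∀ (x : Fin 10 → ℝ) (q m : Fin 10),
      br 10 α β x (Eb q) m = ∑ i : Fin 10, x i * sc 10 α β i q m := by
    intro x q m
    simp only [br, Eb, Finset.sum_apply, Pi.smul_apply, smul_eq_mul]
    congr 1; funext i
    rw [Finset.sum_eq_single q] <;> simp +contextual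
  have hbrL : ∀ (x : Fin 10 → ℝ) (p m : Fin 10),
      br 10 α β (Eb p) x m = ∑ j : Fin 10, x j * sc 10 α β p j m := by
    intro x p m
    simp only [br, Eb, Finset.sum_apply, Pi.smul_apply, smul_eq_mul]
    rw [Finset.sum_eq_single p] <;> simp +contextual [mul_comm]
  have hbas : ∀ p q : Fin 10, br 10 α β (Eb p) (Eb q) = sc 10 α β p q := by
    intro p q; funext m
    rw [hbrR]
    rw [Finset.sum_eq_single p] <;> simp +contextual [Eb]
  have hs : ∀ p q m : Fin 10,
      (∑ j : Fin 10, sc 10 α β p q j * D (Eb j) m)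
        = (∑ i : Fin 10, D (Eb p) i * sc 10 α β i q m)
          + (∑ j : Fin 10, D (Eb q) j * sc 10 α β p j m) := by
    intro p q m
    have h := congrFun (hD (Eb p) (Eb q)) m
    rw [key, hbas] at h
    rw [h, Pi.add_apply, hbrR, hbrL]

  have V0 : ((0:Fin 10):ℕ) = 0 := rfl
  have V1 : ((1:Fin 10):ℕ) = 1 := rfl
  have V2 : ((2:Fin 10):ℕ) = 2 := rfl
  have V3 : ((3:Fin 10):ℕ) = 3 := rfl
  have V4 : ((4:Fin 10):ℕ) = 4 := rfl
  have V5 : ((5:Fin 10):ℕ) = 5 := rfl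
  have V6 : ((6:Fin 10):ℕ) = 6 := rfl
  have V7 : ((7:Fin 10):ℕ) = 7 := rfl
  have V8 : ((8:Fin 10):ℕ) = 8 := rfl
  have V9 : ((9:Fin 10):ℕ) = 9 := rfl
  have S_0_0 : sc 10 α β 0 0 = (0 : Fin 10 → ℝ) - (0 : Fin 10 → ℝ) := rfl
  have S_0_1 : sc 10 α β 0 1 = (ee 10 3) - (0 : Fin 10 → ℝ) := rfl
  have S_0_2 : sc 10 α β 0 2 = (ee 10 4) - (0 : Fin 10 → ℝ) := rfl
  have S_0_3 : sc 10 α β 0 3 = (ee 10 5) - (0 : Fin 10 → ℝ) := rfl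
  have S_0_4 : sc 10 α β 0 4 = (ee 10 6) - (0 : Fin 10 → ℝ) := rfl
  have S_0_5 : sc 10 α β 0 5 = (ee 10 7) - (0 : Fin 10 → ℝ) := rfl
  have S_0_6 : sc 10 α β 0 6 = (ee 10 8) - (0 : Fin 10 → ℝ) := rfl
  have S_0_7 : sc 10 α β 0 7 = (ee 10 9) - (0 : Fin 10 → ℝ) := rfl
  have S_0_8 : sc 10 α β 0 8 = (ee 10 10) - (0 : Fin 10 → ℝ) := rfl
  have S_0_9 : sc 10 α β 0 9 = (ee 10 11) - (0 : Fin 10 → ℝ) := rfl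
  have S_1_0 : sc 10 α β 1 0 = (0 : Fin 10 → ℝ) - (ee 10 3) := rfl
  have S_1_1 : sc 10 α β 1 1 = (0 : Fin 10 → ℝ) - (0 : Fin 10 → ℝ) := rfl
  have S_1_2 : sc 10 α β 1 2 = (ee 10 5 + α • ee 10 6) - (0 : Fin 10 → ℝ) := rfl
  have S_1_3 : sc 10 α β 1 3 = (ee 10 6 + α • ee 10 7) - (0 : Fin 10 → ℝ) := rfl
  have S_1_4 : sc 10 α β 1 4 = (-ee 10 7 + (α - β) • ee 10 8) - (0 : Fin 10 → ℝ) := rfl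
  have S_1_5 : sc 10 α β 1 5 = ((-3 : ℝ) • ee 10 8 + (α - 2 * β) • ee 10 9) - (0 : Fin 10 → ℝ) := rfl
  have S_1_6 : sc 10 α β 1 6 = ((-2 : ℝ) • ee 10 9 - ((5 * α + 7 * β) / 4) • ee 10 10 + ((27 * α ^ 2 + 12 * α * β + β ^ 2) / 16) • ee 10 11) - (0 : Fin 10 → ℝ) := rfl
  have S_1_7 : sc 10 α β 1 7 = ((2 : ℝ) • ee 10 10 - ((23 * α + β) / 4) • ee 10 11) - (0 : Fin 10 → ℝ) := rfl
  have S_1_8 : sc 10 α β 1 8 = (-ee 10 11) - (0 : Fin 10 → ℝ) := rfl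
  have S_1_9 : sc 10 α β 1 9 = (0 : Fin 10 → ℝ) - (0 : Fin 10 → ℝ) := rfl
  have S_2_0 : sc 10 α β 2 0 = (0 : Fin 10 → ℝ) - (ee 10 4) := rfl
  have S_2_1 : sc 10 α β 2 1 = (0 : Fin 10 → ℝ) - (ee 10 5 + α • ee 10 6) := rfl
  have S_2_2 : sc 10 α β 2 2 = (0 : Fin 10 → ℝ) - (0 : Fin 10 → ℝ) := rfl
  have S_2_3 : sc 10 α β 2 3 = ((2 : ℝ) • ee 10 7 + β • ee 10 8) - (0 : Fin 10 → ℝ) := rfl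
  have S_2_4 : sc 10 α β 2 4 = ((2 : ℝ) • ee 10 8 + β • ee 10 9) - (0 : Fin 10 → ℝ) := rfl
  have S_2_5 : sc 10 α β 2 5 = (-ee 10 9 + ((9 * α - β) / 4) • ee 10 10 - ((27 * α ^ 2 + 12 * α * β + β ^ 2) / 16) • ee 10 11) - (0 : Fin 10 → ℝ) := rfl
  have S_2_6 : sc 10 α β 2 6 = ((-4 : ℝ) • ee 10 10 + (3 * (3 * α - β) / 2) • ee 10 11) - (0 : Fin 10 → ℝ) := rfl
  have S_2_7 : sc 10 α β 2 7 = ((3 : ℝ) • ee 10 11) - (0 : Fin 10 → ℝ) := rfl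
  have S_2_8 : sc 10 α β 2 8 = (0 : Fin 10 → ℝ) - (0 : Fin 10 → ℝ) := rfl
  have S_2_9 : sc 10 α β 2 9 = (0 : Fin 10 → ℝ) - (0 : Fin 10 → ℝ) := rfl
  have S_3_0 : sc 10 α β 3 0 = (0 : Fin 10 → ℝ) - (ee 10 5) := rfl
  have S_3_1 : sc 10 α β 3 1 = (0 : Fin 10 → ℝ) - (ee 10 6 + α • ee 10 7) := rfl
  have S_3_2 : sc 10 α β 3 2 = (0 : Fin 10 → ℝ) - ((2 : ℝ) • ee 10 7 + β • ee 10 8) := rfl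
  have S_3_3 : sc 10 α β 3 3 = (0 : Fin 10 → ℝ) - (0 : Fin 10 → ℝ) := rfl
  have S_3_4 : sc 10 α β 3 4 = ((3 : ℝ) • ee 10 9 - ((9 * α - 5 * β) / 4) • ee 10 10 + ((27 * α ^ 2 + 12 * α * β + β ^ 2) / 16) • ee 10 11) - (0 : Fin 10 → ℝ) := rfl
  have S_3_5 : sc 10 α β 3 5 = ((3 : ℝ) • ee 10 10 - ((9 * α - 5 * β) / 4) • ee 10 11) - (0 : Fin 10 → ℝ) := rfl
  have S_3_6 : sc 10 α β 3 6 = ((-7 : ℝ) • ee 10 11) - (0 : Fin 10 → ℝ) := rfl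
  have S_3_7 : sc 10 α β 3 7 = (0 : Fin 10 → ℝ) - (0 : Fin 10 → ℝ) := rfl
  have S_3_8 : sc 10 α β 3 8 = (0 : Fin 10 → ℝ) - (0 : Fin 10 → ℝ) := rfl
  have S_3_9 : sc 10 α β 3 9 = (0 : Fin 10 → ℝ) - (0 : Fin 10 → ℝ) := rfl
  have S_4_0 : sc 10 α β 4 0 = (0 : Fin 10 → ℝ) - (ee 10 6) := rfl
  have S_4_1 : sc 10 α β 4 1 = (0 : Fin 10 → ℝ) - (-ee 10 7 + (α - β) • ee 10 8) := rfl
  have S_4_2 : sc 10 α β 4 2 = (0 : Fin 10 → ℝ) - ((2 : ℝ) • ee 10 8 + β • ee 10 9) := rfl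
  have S_4_3 : sc 10 α β 4 3 = (0 : Fin 10 → ℝ) - ((3 : ℝ) • ee 10 9 - ((9 * α - 5 * β) / 4) • ee 10 10 + ((27 * α ^ 2 + 12 * α * β + β ^ 2) / 16) • ee 10 11) := rfl
  have S_4_4 : sc 10 α β 4 4 = (0 : Fin 10 → ℝ) - (0 : Fin 10 → ℝ) := rfl
  have S_4_5 : sc 10 α β 4 5 = ((10 : ℝ) • ee 10 11) - (0 : Fin 10 → ℝ) := rfl
  have S_4_6 : sc 10 α β 4 6 = (0 : Fin 10 → ℝ) - (0 : Fin 10 → ℝ) := rfl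
  have S_4_7 : sc 10 α β 4 7 = (0 : Fin 10 → ℝ) - (0 : Fin 10 → ℝ) := rfl
  have S_4_8 : sc 10 α β 4 8 = (0 : Fin 10 → ℝ) - (0 : Fin 10 → ℝ) := rfl
  have S_4_9 : sc 10 α β 4 9 = (0 : Fin 10 → ℝ) - (0 : Fin 10 → ℝ) := rfl
  have S_5_0 : sc 10 α β 5 0 = (0 : Fin 10 → ℝ) - (ee 10 7) := rfl
  have S_5_1 : sc 10 α β 5 1 = (0 : Fin 10 → ℝ) - ((-3 : ℝ) • ee 10 8 + (α - 2 * β) • ee 10 9) := rfl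
  have S_5_2 : sc 10 α β 5 2 = (0 : Fin 10 → ℝ) - (-ee 10 9 + ((9 * α - β) / 4) • ee 10 10 - ((27 * α ^ 2 + 12 * α * β + β ^ 2) / 16) • ee 10 11) := rfl
  have S_5_3 : sc 10 α β 5 3 = (0 : Fin 10 → ℝ) - ((3 : ℝ) • ee 10 10 - ((9 * α - 5 * β) / 4) • ee 10 11) := rfl
  have S_5_4 : sc 10 α β 5 4 = (0 : Fin 10 → ℝ) - ((10 : ℝ) • ee 10 11) := rfl
  have S_5_5 : sc 10 α β 5 5 = (0 : Fin 10 → ℝ) - (0 : Fin 10 → ℝ) := rfl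
  have S_5_6 : sc 10 α β 5 6 = (0 : Fin 10 → ℝ) - (0 : Fin 10 → ℝ) := rfl
  have S_5_7 : sc 10 α β 5 7 = (0 : Fin 10 → ℝ) - (0 : Fin 10 → ℝ) := rfl
  have S_5_8 : sc 10 α β 5 8 = (0 : Fin 10 → ℝ) - (0 : Fin 10 → ℝ) := rfl
  have S_5_9 : sc 10 α β 5 9 = (0 : Fin 10 → ℝ) - (0 : Fin 10 → ℝ) := rfl
  have S_6_0 : sc 10 α β 6 0 = (0 : Fin 10 → ℝ) - (ee 10 8) := rfl
  have S_6_1 : sc 10 α β 6 1 = (0 : Fin 10 → ℝ) - ((-2 : ℝ) • ee 10 9 - ((5 * α + 7 * β) / 4) • ee 10 10 + ((27 * α ^ 2 + 12 * α * β + β ^ 2) / 16) • ee 10 11) := rfl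
  have S_6_2 : sc 10 α β 6 2 = (0 : Fin 10 → ℝ) - ((-4 : ℝ) • ee 10 10 + (3 * (3 * α - β) / 2) • ee 10 11) := rfl
  have S_6_3 : sc 10 α β 6 3 = (0 : Fin 10 → ℝ) - ((-7 : ℝ) • ee 10 11) := rfl
  have S_6_4 : sc 10 α β 6 4 = (0 : Fin 10 → ℝ) - (0 : Fin 10 → ℝ) := rfl
  have S_6_5 : sc 10 α β 6 5 = (0 : Fin 10 → ℝ) - (0 : Fin 10 → ℝ) := rfl
  have S_6_6 : sc 10 α β 6 6 = (0 : Fin 10 → ℝ) - (0 : Fin 10 → ℝ) := rfl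
  have S_6_7 : sc 10 α β 6 7 = (0 : Fin 10 → ℝ) - (0 : Fin 10 → ℝ) := rfl
  have S_6_8 : sc 10 α β 6 8 = (0 : Fin 10 → ℝ) - (0 : Fin 10 → ℝ) := rfl
  have S_6_9 : sc 10 α β 6 9 = (0 : Fin 10 → ℝ) - (0 : Fin 10 → ℝ) := rfl
  have S_7_0 : sc 10 α β 7 0 = (0 : Fin 10 → ℝ) - (ee 10 9) := rfl
  have S_7_1 : sc 10 α β 7 1 = (0 : Fin 10 → ℝ) - ((2 : ℝ) • ee 10 10 - ((23 * α + β) / 4) • ee 10 11) := rfl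
  have S_7_2 : sc 10 α β 7 2 = (0 : Fin 10 → ℝ) - ((3 : ℝ) • ee 10 11) := rfl
  have S_7_3 : sc 10 α β 7 3 = (0 : Fin 10 → ℝ) - (0 : Fin 10 → ℝ) := rfl
  have S_7_4 : sc 10 α β 7 4 = (0 : Fin 10 → ℝ) - (0 : Fin 10 → ℝ) := rfl
  have S_7_5 : sc 10 α β 7 5 = (0 : Fin 10 → ℝ) - (0 : Fin 10 → ℝ) := rfl
  have S_7_6 : sc 10 α β 7 6 = (0 : Fin 10 → ℝ) - (0 : Fin 10 → ℝ) := rfl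
  have S_7_7 : sc 10 α β 7 7 = (0 : Fin 10 → ℝ) - (0 : Fin 10 → ℝ) := rfl
  have S_7_8 : sc 10 α β 7 8 = (0 : Fin 10 → ℝ) - (0 : Fin 10 → ℝ) := rfl
  have S_7_9 : sc 10 α β 7 9 = (0 : Fin 10 → ℝ) - (0 : Fin 10 → ℝ) := rfl
  have S_8_0 : sc 10 α β 8 0 = (0 : Fin 10 → ℝ) - (ee 10 10) := rfl
  have S_8_1 : sc 10 α β 8 1 = (0 : Fin 10 → ℝ) - (-ee 10 11) := rfl
  have S_8_2 : sc 10 α β 8 2 = (0 : Fin 10 → ℝ) - (0 : Fin 10 → ℝ) := rfl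
  have S_8_3 : sc 10 α β 8 3 = (0 : Fin 10 → ℝ) - (0 : Fin 10 → ℝ) := rfl
  have S_8_4 : sc 10 α β 8 4 = (0 : Fin 10 → ℝ) - (0 : Fin 10 → ℝ) := rfl
  have S_8_5 : sc 10 α β 8 5 = (0 : Fin 10 → ℝ) - (0 : Fin 10 → ℝ) := rfl
  have S_8_6 : sc 10 α β 8 6 = (0 : Fin 10 → ℝ) - (0 : Fin 10 → ℝ) := rfl
  have S_8_7 : sc 10 α β 8 7 = (0 : Fin 10 → ℝ) - (0 : Fin 10 → ℝ) := rfl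
  have S_8_8 : sc 10 α β 8 8 = (0 : Fin 10 → ℝ) - (0 : Fin 10 → ℝ) := rfl
  have S_8_9 : sc 10 α β 8 9 = (0 : Fin 10 → ℝ) - (0 : Fin 10 → ℝ) := rfl
  have S_9_0 : sc 10 α β 9 0 = (0 : Fin 10 → ℝ) - (ee 10 11) := rfl
  have S_9_1 : sc 10 α β 9 1 = (0 : Fin 10 → ℝ) - (0 : Fin 10 → ℝ) := rfl
  have S_9_2 : sc 10 α β 9 2 = (0 : Fin 10 → ℝ) - (0 : Fin 10 → ℝ) := rfl
  have S_9_3 : sc 10 α β 9 3 = (0 : Fin 10 → ℝ) - (0 : Fin 10 → ℝ) := rfl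
  have S_9_4 : sc 10 α β 9 4 = (0 : Fin 10 → ℝ) - (0 : Fin 10 → ℝ) := rfl
  have S_9_5 : sc 10 α β 9 5 = (0 : Fin 10 → ℝ) - (0 : Fin 10 → ℝ) := rfl
  have S_9_6 : sc 10 α β 9 6 = (0 : Fin 10 → ℝ) - (0 : Fin 10 → ℝ) := rfl
  have S_9_7 : sc 10 α β 9 7 = (0 : Fin 10 → ℝ) - (0 : Fin 10 → ℝ) := rfl
  have S_9_8 : sc 10 α β 9 8 = (0 : Fin 10 → ℝ) - (0 : Fin 10 → ℝ) := rfl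
  have S_9_9 : sc 10 α β 9 9 = (0 : Fin 10 → ℝ) - (0 : Fin 10 → ℝ) := rfl
  have E_1_2_1 : ((1)) * D (Eb 2) 0 = 0 := by
    have h := hs 0 1 0
    simp only [sum10] at h
    norm_num [S_0_0,S_0_1,S_0_2,S_0_3,S_0_4,S_0_5,S_0_6,S_0_7,S_0_8,S_0_9,S_1_1,S_2_1,S_3_1,S_4_1,S_5_1,S_6_1,S_7_1,S_8_1,S_9_1,V0,V1,V2,V3,V4,V5,V6,V7,V8,V9,ee] at h
    linear_combination h
  have E_1_2_2 : ((1)) * D (Eb 2) 1 = 0 := by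
    have h := hs 0 1 1
    simp only [sum10] at h
    norm_num [S_0_0,S_0_1,S_0_2,S_0_3,S_0_4,S_0_5,S_0_6,S_0_7,S_0_8,S_0_9,S_1_1,S_2_1,S_3_1,S_4_1,S_5_1,S_6_1,S_7_1,S_8_1,S_9_1,V0,V1,V2,V3,V4,V5,V6,V7,V8,V9,ee] at h
    linear_combination h
  have E_1_3_1 : ((1)) * D (Eb 3) 0 = 0 := by
    have h := hs 0 2 0
    simp only [sum10] at h
    norm_num [S_0_0,S_0_1,S_0_2,S_0_3,S_0_4,S_0_5,S_0_6,S_0_7,S_0_8,S_0_9,S_1_2,S_2_2,S_3_2,S_4_2,S_5_2,S_6_2,S_7_2,S_8_2,S_9_2,V0,V1,V2,V3,V4,V5,V6,V7,V8,V9,ee] at h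
    linear_combination h
  have E_1_3_2 : ((1)) * D (Eb 3) 1 = 0 := by
    have h := hs 0 2 1
    simp only [sum10] at h
    norm_num [S_0_0,S_0_1,S_0_2,S_0_3,S_0_4,S_0_5,S_0_6,S_0_7,S_0_8,S_0_9,S_1_2,S_2_2,S_3_2,S_4_2,S_5_2,S_6_2,S_7_2,S_8_2,S_9_2,V0,V1,V2,V3,V4,V5,V6,V7,V8,V9,ee] at h
    linear_combination h
  have E_1_3_3 : ((-1)) * D (Eb 2) 1 + ((1)) * D (Eb 3) 2 = 0 := by
    have h := hs 0 2 2
    simp only [sum10] at h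
    norm_num [S_0_0,S_0_1,S_0_2,S_0_3,S_0_4,S_0_5,S_0_6,S_0_7,S_0_8,S_0_9,S_1_2,S_2_2,S_3_2,S_4_2,S_5_2,S_6_2,S_7_2,S_8_2,S_9_2,V0,V1,V2,V3,V4,V5,V6,V7,V8,V9,ee] at h
    linear_combination h
  have E_1_4_1 : ((1)) * D (Eb 4) 0 = 0 := by
    have h := hs 0 3 0
    simp only [sum10] at h
    norm_num [S_0_0,S_0_1,S_0_2,S_0_3,S_0_4,S_0_5,S_0_6,S_0_7,S_0_8,S_0_9,S_1_3,S_2_3,S_3_3,S_4_3,S_5_3,S_6_3,S_7_3,S_8_3,S_9_3,V0,V1,V2,V3,V4,V5,V6,V7,V8,V9,ee] at h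
    linear_combination h
  have E_1_4_2 : ((1)) * D (Eb 4) 1 = 0 := by
    have h := hs 0 3 1
    simp only [sum10] at h
    norm_num [S_0_0,S_0_1,S_0_2,S_0_3,S_0_4,S_0_5,S_0_6,S_0_7,S_0_8,S_0_9,S_1_3,S_2_3,S_3_3,S_4_3,S_5_3,S_6_3,S_7_3,S_8_3,S_9_3,V0,V1,V2,V3,V4,V5,V6,V7,V8,V9,ee] at h
    linear_combination h
  have E_1_4_3 : ((-1)) * D (Eb 3) 1 + ((1)) * D (Eb 4) 2 = 0 := by
    have h := hs 0 3 2
    simp only [sum10] at h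
    norm_num [S_0_0,S_0_1,S_0_2,S_0_3,S_0_4,S_0_5,S_0_6,S_0_7,S_0_8,S_0_9,S_1_3,S_2_3,S_3_3,S_4_3,S_5_3,S_6_3,S_7_3,S_8_3,S_9_3,V0,V1,V2,V3,V4,V5,V6,V7,V8,V9,ee] at h
    linear_combination h
  have E_1_4_4 : ((-1)) * D (Eb 3) 2 + ((1)) * D (Eb 4) 3 = 0 := by
    have h := hs 0 3 3
    simp only [sum10] at h
    norm_num [S_0_0,S_0_1,S_0_2,S_0_3,S_0_4,S_0_5,S_0_6,S_0_7,S_0_8,S_0_9,S_1_3,S_2_3,S_3_3,S_4_3,S_5_3,S_6_3,S_7_3,S_8_3,S_9_3,V0,V1,V2,V3,V4,V5,V6,V7,V8,V9,ee] at h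
    linear_combination h
  have E_1_5_1 : ((1)) * D (Eb 5) 0 = 0 := by
    have h := hs 0 4 0
    simp only [sum10] at h
    norm_num [S_0_0,S_0_1,S_0_2,S_0_3,S_0_4,S_0_5,S_0_6,S_0_7,S_0_8,S_0_9,S_1_4,S_2_4,S_3_4,S_4_4,S_5_4,S_6_4,S_7_4,S_8_4,S_9_4,V0,V1,V2,V3,V4,V5,V6,V7,V8,V9,ee] at h
    linear_combination h
  have E_1_5_2 : ((1)) * D (Eb 5) 1 = 0 := by
    have h := hs 0 4 1
    simp only [sum10] at h
    norm_num [S_0_0,S_0_1,S_0_2,S_0_3,S_0_4,S_0_5,S_0_6,S_0_7,S_0_8,S_0_9,S_1_4,S_2_4,S_3_4,S_4_4,S_5_4,S_6_4,S_7_4,S_8_4,S_9_4,V0,V1,V2,V3,V4,V5,V6,V7,V8,V9,ee] at h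
    linear_combination h
  have E_1_5_3 : ((-1)) * D (Eb 4) 1 + ((1)) * D (Eb 5) 2 = 0 := by
    have h := hs 0 4 2
    simp only [sum10] at h
    norm_num [S_0_0,S_0_1,S_0_2,S_0_3,S_0_4,S_0_5,S_0_6,S_0_7,S_0_8,S_0_9,S_1_4,S_2_4,S_3_4,S_4_4,S_5_4,S_6_4,S_7_4,S_8_4,S_9_4,V0,V1,V2,V3,V4,V5,V6,V7,V8,V9,ee] at h
    linear_combination h
  have E_1_5_4 : ((-1)) * D (Eb 4) 2 + ((1)) * D (Eb 5) 3 = 0 := by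
    have h := hs 0 4 3
    simp only [sum10] at h
    norm_num [S_0_0,S_0_1,S_0_2,S_0_3,S_0_4,S_0_5,S_0_6,S_0_7,S_0_8,S_0_9,S_1_4,S_2_4,S_3_4,S_4_4,S_5_4,S_6_4,S_7_4,S_8_4,S_9_4,V0,V1,V2,V3,V4,V5,V6,V7,V8,V9,ee] at h
    linear_combination h
  have E_1_5_5 : ((-1)) * D (Eb 4) 3 + ((1)) * D (Eb 5) 4 = 0 := by
    have h := hs 0 4 4
    simp only [sum10] at h
    norm_num [S_0_0,S_0_1,S_0_2,S_0_3,S_0_4,S_0_5,S_0_6,S_0_7,S_0_8,S_0_9,S_1_4,S_2_4,S_3_4,S_4_4,S_5_4,S_6_4,S_7_4,S_8_4,S_9_4,V0,V1,V2,V3,V4,V5,V6,V7,V8,V9,ee] at h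
    linear_combination h
  have E_1_6_1 : ((1)) * D (Eb 6) 0 = 0 := by
    have h := hs 0 5 0
    simp only [sum10] at h
    norm_num [S_0_0,S_0_1,S_0_2,S_0_3,S_0_4,S_0_5,S_0_6,S_0_7,S_0_8,S_0_9,S_1_5,S_2_5,S_3_5,S_4_5,S_5_5,S_6_5,S_7_5,S_8_5,S_9_5,V0,V1,V2,V3,V4,V5,V6,V7,V8,V9,ee] at h
    linear_combination h
  have E_1_6_2 : ((1)) * D (Eb 6) 1 = 0 := by
    have h := hs 0 5 1
    simp only [sum10] at h
    norm_num [S_0_0,S_0_1,S_0_2,S_0_3,S_0_4,S_0_5,S_0_6,S_0_7,S_0_8,S_0_9,S_1_5,S_2_5,S_3_5,S_4_5,S_5_5,S_6_5,S_7_5,S_8_5,S_9_5,V0,V1,V2,V3,V4,V5,V6,V7,V8,V9,ee] at h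
    linear_combination h
  have E_1_6_3 : ((-1)) * D (Eb 5) 1 + ((1)) * D (Eb 6) 2 = 0 := by
    have h := hs 0 5 2
    simp only [sum10] at h
    norm_num [S_0_0,S_0_1,S_0_2,S_0_3,S_0_4,S_0_5,S_0_6,S_0_7,S_0_8,S_0_9,S_1_5,S_2_5,S_3_5,S_4_5,S_5_5,S_6_5,S_7_5,S_8_5,S_9_5,V0,V1,V2,V3,V4,V5,V6,V7,V8,V9,ee] at h
    linear_combination h
  have E_1_6_4 : ((-1)) * D (Eb 5) 2 + ((1)) * D (Eb 6) 3 = 0 := by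
    have h := hs 0 5 3
    simp only [sum10] at h
    norm_num [S_0_0,S_0_1,S_0_2,S_0_3,S_0_4,S_0_5,S_0_6,S_0_7,S_0_8,S_0_9,S_1_5,S_2_5,S_3_5,S_4_5,S_5_5,S_6_5,S_7_5,S_8_5,S_9_5,V0,V1,V2,V3,V4,V5,V6,V7,V8,V9,ee] at h
    linear_combination h
  have E_1_6_5 : ((-1)) * D (Eb 5) 3 + ((1)) * D (Eb 6) 4 = 0 := by
    have h := hs 0 5 4
    simp only [sum10] at h
    norm_num [S_0_0,S_0_1,S_0_2,S_0_3,S_0_4,S_0_5,S_0_6,S_0_7,S_0_8,S_0_9,S_1_5,S_2_5,S_3_5,S_4_5,S_5_5,S_6_5,S_7_5,S_8_5,S_9_5,V0,V1,V2,V3,V4,V5,V6,V7,V8,V9,ee] at h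
    linear_combination h
  have E_1_6_6 : ((-1)) * D (Eb 5) 4 + ((1)) * D (Eb 6) 5 = 0 := by
    have h := hs 0 5 5
    simp only [sum10] at h
    norm_num [S_0_0,S_0_1,S_0_2,S_0_3,S_0_4,S_0_5,S_0_6,S_0_7,S_0_8,S_0_9,S_1_5,S_2_5,S_3_5,S_4_5,S_5_5,S_6_5,S_7_5,S_8_5,S_9_5,V0,V1,V2,V3,V4,V5,V6,V7,V8,V9,ee] at h
    linear_combination h
  have E_1_7_1 : ((1)) * D (Eb 7) 0 = 0 := by
    have h := hs 0 6 0
    simp only [sum10] at h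
    norm_num [S_0_0,S_0_1,S_0_2,S_0_3,S_0_4,S_0_5,S_0_6,S_0_7,S_0_8,S_0_9,S_1_6,S_2_6,S_3_6,S_4_6,S_5_6,S_6_6,S_7_6,S_8_6,S_9_6,V0,V1,V2,V3,V4,V5,V6,V7,V8,V9,ee] at h
    linear_combination h
  have E_1_7_2 : ((1)) * D (Eb 7) 1 = 0 := by
    have h := hs 0 6 1
    simp only [sum10] at h
    norm_num [S_0_0,S_0_1,S_0_2,S_0_3,S_0_4,S_0_5,S_0_6,S_0_7,S_0_8,S_0_9,S_1_6,S_2_6,S_3_6,S_4_6,S_5_6,S_6_6,S_7_6,S_8_6,S_9_6,V0,V1,V2,V3,V4,V5,V6,V7,V8,V9,ee] at h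
    linear_combination h
  have E_1_7_3 : ((-1)) * D (Eb 6) 1 + ((1)) * D (Eb 7) 2 = 0 := by
    have h := hs 0 6 2
    simp only [sum10] at h
    norm_num [S_0_0,S_0_1,S_0_2,S_0_3,S_0_4,S_0_5,S_0_6,S_0_7,S_0_8,S_0_9,S_1_6,S_2_6,S_3_6,S_4_6,S_5_6,S_6_6,S_7_6,S_8_6,S_9_6,V0,V1,V2,V3,V4,V5,V6,V7,V8,V9,ee] at h
    linear_combination h
  have E_1_7_4 : ((-1)) * D (Eb 6) 2 + ((1)) * D (Eb 7) 3 = 0 := by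
    have h := hs 0 6 3
    simp only [sum10] at h
    norm_num [S_0_0,S_0_1,S_0_2,S_0_3,S_0_4,S_0_5,S_0_6,S_0_7,S_0_8,S_0_9,S_1_6,S_2_6,S_3_6,S_4_6,S_5_6,S_6_6,S_7_6,S_8_6,S_9_6,V0,V1,V2,V3,V4,V5,V6,V7,V8,V9,ee] at h
    linear_combination h
  have E_1_7_5 : ((-1)) * D (Eb 6) 3 + ((1)) * D (Eb 7) 4 = 0 := by
    have h := hs 0 6 4
    simp only [sum10] at h
    norm_num [S_0_0,S_0_1,S_0_2,S_0_3,S_0_4,S_0_5,S_0_6,S_0_7,S_0_8,S_0_9,S_1_6,S_2_6,S_3_6,S_4_6,S_5_6,S_6_6,S_7_6,S_8_6,S_9_6,V0,V1,V2,V3,V4,V5,V6,V7,V8,V9,ee] at h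
    linear_combination h
  have E_1_7_6 : ((-1)) * D (Eb 6) 4 + ((1)) * D (Eb 7) 5 = 0 := by
    have h := hs 0 6 5
    simp only [sum10] at h
    norm_num [S_0_0,S_0_1,S_0_2,S_0_3,S_0_4,S_0_5,S_0_6,S_0_7,S_0_8,S_0_9,S_1_6,S_2_6,S_3_6,S_4_6,S_5_6,S_6_6,S_7_6,S_8_6,S_9_6,V0,V1,V2,V3,V4,V5,V6,V7,V8,V9,ee] at h
    linear_combination h
  have E_1_7_7 : ((-1)) * D (Eb 6) 5 + ((1)) * D (Eb 7) 6 = 0 := by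
    have h := hs 0 6 6
    simp only [sum10] at h
    norm_num [S_0_0,S_0_1,S_0_2,S_0_3,S_0_4,S_0_5,S_0_6,S_0_7,S_0_8,S_0_9,S_1_6,S_2_6,S_3_6,S_4_6,S_5_6,S_6_6,S_7_6,S_8_6,S_9_6,V0,V1,V2,V3,V4,V5,V6,V7,V8,V9,ee] at h
    linear_combination h
  have E_1_8_1 : ((1)) * D (Eb 8) 0 = 0 := by
    have h := hs 0 7 0
    simp only [sum10] at h
    norm_num [S_0_0,S_0_1,S_0_2,S_0_3,S_0_4,S_0_5,S_0_6,S_0_7,S_0_8,S_0_9,S_1_7,S_2_7,S_3_7,S_4_7,S_5_7,S_6_7,S_7_7,S_8_7,S_9_7,V0,V1,V2,V3,V4,V5,V6,V7,V8,V9,ee] at h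
    linear_combination h
  have E_1_8_2 : ((1)) * D (Eb 8) 1 = 0 := by
    have h := hs 0 7 1
    simp only [sum10] at h
    norm_num [S_0_0,S_0_1,S_0_2,S_0_3,S_0_4,S_0_5,S_0_6,S_0_7,S_0_8,S_0_9,S_1_7,S_2_7,S_3_7,S_4_7,S_5_7,S_6_7,S_7_7,S_8_7,S_9_7,V0,V1,V2,V3,V4,V5,V6,V7,V8,V9,ee] at h
    linear_combination h
  have E_1_8_3 : ((-1)) * D (Eb 7) 1 + ((1)) * D (Eb 8) 2 = 0 := by
    have h := hs 0 7 2
    simp only [sum10] at h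
    norm_num [S_0_0,S_0_1,S_0_2,S_0_3,S_0_4,S_0_5,S_0_6,S_0_7,S_0_8,S_0_9,S_1_7,S_2_7,S_3_7,S_4_7,S_5_7,S_6_7,S_7_7,S_8_7,S_9_7,V0,V1,V2,V3,V4,V5,V6,V7,V8,V9,ee] at h
    linear_combination h
  have E_1_8_4 : ((-1)) * D (Eb 7) 2 + ((1)) * D (Eb 8) 3 = 0 := by
    have h := hs 0 7 3
    simp only [sum10] at h
    norm_num [S_0_0,S_0_1,S_0_2,S_0_3,S_0_4,S_0_5,S_0_6,S_0_7,S_0_8,S_0_9,S_1_7,S_2_7,S_3_7,S_4_7,S_5_7,S_6_7,S_7_7,S_8_7,S_9_7,V0,V1,V2,V3,V4,V5,V6,V7,V8,V9,ee] at h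
    linear_combination h
  have E_1_8_5 : ((-1)) * D (Eb 7) 3 + ((1)) * D (Eb 8) 4 = 0 := by
    have h := hs 0 7 4
    simp only [sum10] at h
    norm_num [S_0_0,S_0_1,S_0_2,S_0_3,S_0_4,S_0_5,S_0_6,S_0_7,S_0_8,S_0_9,S_1_7,S_2_7,S_3_7,S_4_7,S_5_7,S_6_7,S_7_7,S_8_7,S_9_7,V0,V1,V2,V3,V4,V5,V6,V7,V8,V9,ee] at h
    linear_combination h
  have E_1_8_6 : ((-1)) * D (Eb 7) 4 + ((1)) * D (Eb 8) 5 = 0 := by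
    have h := hs 0 7 5
    simp only [sum10] at h
    norm_num [S_0_0,S_0_1,S_0_2,S_0_3,S_0_4,S_0_5,S_0_6,S_0_7,S_0_8,S_0_9,S_1_7,S_2_7,S_3_7,S_4_7,S_5_7,S_6_7,S_7_7,S_8_7,S_9_7,V0,V1,V2,V3,V4,V5,V6,V7,V8,V9,ee] at h
    linear_combination h
  have E_1_8_7 : ((-1)) * D (Eb 7) 5 + ((1)) * D (Eb 8) 6 = 0 := by
    have h := hs 0 7 6
    simp only [sum10] at h
    norm_num [S_0_0,S_0_1,S_0_2,S_0_3,S_0_4,S_0_5,S_0_6,S_0_7,S_0_8,S_0_9,S_1_7,S_2_7,S_3_7,S_4_7,S_5_7,S_6_7,S_7_7,S_8_7,S_9_7,V0,V1,V2,V3,V4,V5,V6,V7,V8,V9,ee] at h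
    linear_combination h
  have E_1_8_8 : ((-1)) * D (Eb 7) 6 + ((1)) * D (Eb 8) 7 = 0 := by
    have h := hs 0 7 7
    simp only [sum10] at h
    norm_num [S_0_0,S_0_1,S_0_2,S_0_3,S_0_4,S_0_5,S_0_6,S_0_7,S_0_8,S_0_9,S_1_7,S_2_7,S_3_7,S_4_7,S_5_7,S_6_7,S_7_7,S_8_7,S_9_7,V0,V1,V2,V3,V4,V5,V6,V7,V8,V9,ee] at h
    linear_combination h
  have E_1_9_1 : ((1)) * D (Eb 9) 0 = 0 := by
    have h := hs 0 8 0
    simp only [sum10] at h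
    norm_num [S_0_0,S_0_1,S_0_2,S_0_3,S_0_4,S_0_5,S_0_6,S_0_7,S_0_8,S_0_9,S_1_8,S_2_8,S_3_8,S_4_8,S_5_8,S_6_8,S_7_8,S_8_8,S_9_8,V0,V1,V2,V3,V4,V5,V6,V7,V8,V9,ee] at h
    linear_combination h
  have E_1_9_2 : ((1)) * D (Eb 9) 1 = 0 := by
    have h := hs 0 8 1
    simp only [sum10] at h
    norm_num [S_0_0,S_0_1,S_0_2,S_0_3,S_0_4,S_0_5,S_0_6,S_0_7,S_0_8,S_0_9,S_1_8,S_2_8,S_3_8,S_4_8,S_5_8,S_6_8,S_7_8,S_8_8,S_9_8,V0,V1,V2,V3,V4,V5,V6,V7,V8,V9,ee] at h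
    linear_combination h
  have E_1_9_3 : ((-1)) * D (Eb 8) 1 + ((1)) * D (Eb 9) 2 = 0 := by
    have h := hs 0 8 2
    simp only [sum10] at h
    norm_num [S_0_0,S_0_1,S_0_2,S_0_3,S_0_4,S_0_5,S_0_6,S_0_7,S_0_8,S_0_9,S_1_8,S_2_8,S_3_8,S_4_8,S_5_8,S_6_8,S_7_8,S_8_8,S_9_8,V0,V1,V2,V3,V4,V5,V6,V7,V8,V9,ee] at h
    linear_combination h
  have E_1_9_4 : ((-1)) * D (Eb 8) 2 + ((1)) * D (Eb 9) 3 = 0 := by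
    have h := hs 0 8 3
    simp only [sum10] at h
    norm_num [S_0_0,S_0_1,S_0_2,S_0_3,S_0_4,S_0_5,S_0_6,S_0_7,S_0_8,S_0_9,S_1_8,S_2_8,S_3_8,S_4_8,S_5_8,S_6_8,S_7_8,S_8_8,S_9_8,V0,V1,V2,V3,V4,V5,V6,V7,V8,V9,ee] at h
    linear_combination h
  have E_1_9_5 : ((-1)) * D (Eb 8) 3 + ((1)) * D (Eb 9) 4 = 0 := by
    have h := hs 0 8 4
    simp only [sum10] at h
    norm_num [S_0_0,S_0_1,S_0_2,S_0_3,S_0_4,S_0_5,S_0_6,S_0_7,S_0_8,S_0_9,S_1_8,S_2_8,S_3_8,S_4_8,S_5_8,S_6_8,S_7_8,S_8_8,S_9_8,V0,V1,V2,V3,V4,V5,V6,V7,V8,V9,ee] at h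
    linear_combination h
  have E_1_9_6 : ((-1)) * D (Eb 8) 4 + ((1)) * D (Eb 9) 5 = 0 := by
    have h := hs 0 8 5
    simp only [sum10] at h
    norm_num [S_0_0,S_0_1,S_0_2,S_0_3,S_0_4,S_0_5,S_0_6,S_0_7,S_0_8,S_0_9,S_1_8,S_2_8,S_3_8,S_4_8,S_5_8,S_6_8,S_7_8,S_8_8,S_9_8,V0,V1,V2,V3,V4,V5,V6,V7,V8,V9,ee] at h
    linear_combination h
  have E_1_9_7 : ((-1)) * D (Eb 8) 5 + ((1)) * D (Eb 9) 6 = 0 := by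
    have h := hs 0 8 6
    simp only [sum10] at h
    norm_num [S_0_0,S_0_1,S_0_2,S_0_3,S_0_4,S_0_5,S_0_6,S_0_7,S_0_8,S_0_9,S_1_8,S_2_8,S_3_8,S_4_8,S_5_8,S_6_8,S_7_8,S_8_8,S_9_8,V0,V1,V2,V3,V4,V5,V6,V7,V8,V9,ee] at h
    linear_combination h
  have E_1_9_8 : ((-1)) * D (Eb 8) 6 + ((1)) * D (Eb 9) 7 = 0 := by
    have h := hs 0 8 7
    simp only [sum10] at h
    norm_num [S_0_0,S_0_1,S_0_2,S_0_3,S_0_4,S_0_5,S_0_6,S_0_7,S_0_8,S_0_9,S_1_8,S_2_8,S_3_8,S_4_8,S_5_8,S_6_8,S_7_8,S_8_8,S_9_8,V0,V1,V2,V3,V4,V5,V6,V7,V8,V9,ee] at h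
    linear_combination h
  have E_1_9_9 : ((-1)) * D (Eb 8) 7 + ((1)) * D (Eb 9) 8 = 0 := by
    have h := hs 0 8 8
    simp only [sum10] at h
    norm_num [S_0_0,S_0_1,S_0_2,S_0_3,S_0_4,S_0_5,S_0_6,S_0_7,S_0_8,S_0_9,S_1_8,S_2_8,S_3_8,S_4_8,S_5_8,S_6_8,S_7_8,S_8_8,S_9_8,V0,V1,V2,V3,V4,V5,V6,V7,V8,V9,ee] at h
    linear_combination h
  have E_2_3_4 : ((-1)) * D (Eb 1) 0 + ((1)) * D (Eb 4) 3 + ((1)*α) * D (Eb 5) 3 = 0 := by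
    have h := hs 1 2 3
    simp only [sum10] at h
    norm_num [S_0_2,S_1_0,S_1_1,S_1_2,S_1_3,S_1_4,S_1_5,S_1_6,S_1_7,S_1_8,S_1_9,S_2_2,S_3_2,S_4_2,S_5_2,S_6_2,S_7_2,S_8_2,S_9_2,V0,V1,V2,V3,V4,V5,V6,V7,V8,V9,ee] at h
    linear_combination h
  have E_1_2_3 : ((-1)) * D (Eb 0) 0 + ((-1)) * D (Eb 1) 1 + ((1)) * D (Eb 2) 2 = 0 := by
    have h := hs 0 1 2
    simp only [sum10] at h
    norm_num [S_0_0,S_0_1,S_0_2,S_0_3,S_0_4,S_0_5,S_0_6,S_0_7,S_0_8,S_0_9,S_1_1,S_2_1,S_3_1,S_4_1,S_5_1,S_6_1,S_7_1,S_8_1,S_9_1,V0,V1,V2,V3,V4,V5,V6,V7,V8,V9,ee] at h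
    linear_combination h
  have E_1_3_4 : ((-1)) * D (Eb 0) 0 + ((-1)) * D (Eb 2) 2 + ((1)) * D (Eb 3) 3 = 0 := by
    have h := hs 0 2 3
    simp only [sum10] at h
    norm_num [S_0_0,S_0_1,S_0_2,S_0_3,S_0_4,S_0_5,S_0_6,S_0_7,S_0_8,S_0_9,S_1_2,S_2_2,S_3_2,S_4_2,S_5_2,S_6_2,S_7_2,S_8_2,S_9_2,V0,V1,V2,V3,V4,V5,V6,V7,V8,V9,ee] at h
    linear_combination h
  have E_1_4_5 : ((-1)) * D (Eb 0) 0 + ((-1)) * D (Eb 3) 3 + ((1)) * D (Eb 4) 4 = 0 := by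
    have h := hs 0 3 4
    simp only [sum10] at h
    norm_num [S_0_0,S_0_1,S_0_2,S_0_3,S_0_4,S_0_5,S_0_6,S_0_7,S_0_8,S_0_9,S_1_3,S_2_3,S_3_3,S_4_3,S_5_3,S_6_3,S_7_3,S_8_3,S_9_3,V0,V1,V2,V3,V4,V5,V6,V7,V8,V9,ee] at h
    linear_combination h
  have E_1_5_6 : ((-1)) * D (Eb 0) 0 + ((-1)) * D (Eb 4) 4 + ((1)) * D (Eb 5) 5 = 0 := by
    have h := hs 0 4 5
    simp only [sum10] at h
    norm_num [S_0_0,S_0_1,S_0_2,S_0_3,S_0_4,S_0_5,S_0_6,S_0_7,S_0_8,S_0_9,S_1_4,S_2_4,S_3_4,S_4_4,S_5_4,S_6_4,S_7_4,S_8_4,S_9_4,V0,V1,V2,V3,V4,V5,V6,V7,V8,V9,ee] at h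
    linear_combination h
  have E_1_6_7 : ((-1)) * D (Eb 0) 0 + ((-1)) * D (Eb 5) 5 + ((1)) * D (Eb 6) 6 = 0 := by
    have h := hs 0 5 6
    simp only [sum10] at h
    norm_num [S_0_0,S_0_1,S_0_2,S_0_3,S_0_4,S_0_5,S_0_6,S_0_7,S_0_8,S_0_9,S_1_5,S_2_5,S_3_5,S_4_5,S_5_5,S_6_5,S_7_5,S_8_5,S_9_5,V0,V1,V2,V3,V4,V5,V6,V7,V8,V9,ee] at h
    linear_combination h
  have E_1_7_8 : ((-1)) * D (Eb 0) 0 + ((-1)) * D (Eb 6) 6 + ((1)) * D (Eb 7) 7 = 0 := by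
    have h := hs 0 6 7
    simp only [sum10] at h
    norm_num [S_0_0,S_0_1,S_0_2,S_0_3,S_0_4,S_0_5,S_0_6,S_0_7,S_0_8,S_0_9,S_1_6,S_2_6,S_3_6,S_4_6,S_5_6,S_6_6,S_7_6,S_8_6,S_9_6,V0,V1,V2,V3,V4,V5,V6,V7,V8,V9,ee] at h
    linear_combination h
  have E_1_8_9 : ((-1)) * D (Eb 0) 0 + ((-1)) * D (Eb 7) 7 + ((1)) * D (Eb 8) 8 = 0 := by
    have h := hs 0 7 8
    simp only [sum10] at h
    norm_num [S_0_0,S_0_1,S_0_2,S_0_3,S_0_4,S_0_5,S_0_6,S_0_7,S_0_8,S_0_9,S_1_7,S_2_7,S_3_7,S_4_7,S_5_7,S_6_7,S_7_7,S_8_7,S_9_7,V0,V1,V2,V3,V4,V5,V6,V7,V8,V9,ee] at h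
    linear_combination h
  have E_1_9_10 : ((-1)) * D (Eb 0) 0 + ((-1)) * D (Eb 8) 8 + ((1)) * D (Eb 9) 9 = 0 := by
    have h := hs 0 8 9
    simp only [sum10] at h
    norm_num [S_0_0,S_0_1,S_0_2,S_0_3,S_0_4,S_0_5,S_0_6,S_0_7,S_0_8,S_0_9,S_1_8,S_2_8,S_3_8,S_4_8,S_5_8,S_6_8,S_7_8,S_8_8,S_9_8,V0,V1,V2,V3,V4,V5,V6,V7,V8,V9,ee] at h
    linear_combination h
  have E_2_3_5 : ((-1)) * D (Eb 1) 1 + ((-1)) * D (Eb 2) 2 + ((1)) * D (Eb 4) 4 + ((1)*α) * D (Eb 5) 4 = 0 := by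
    have h := hs 1 2 4
    simp only [sum10] at h
    norm_num [S_0_2,S_1_0,S_1_1,S_1_2,S_1_3,S_1_4,S_1_5,S_1_6,S_1_7,S_1_8,S_1_9,S_2_2,S_3_2,S_4_2,S_5_2,S_6_2,S_7_2,S_8_2,S_9_2,V0,V1,V2,V3,V4,V5,V6,V7,V8,V9,ee] at h
    linear_combination h
  have E_1_2_4 : ((-1)) * D (Eb 1) 2 + ((1)) * D (Eb 2) 3 = 0 := by
    have h := hs 0 1 3
    simp only [sum10] at h
    norm_num [S_0_0,S_0_1,S_0_2,S_0_3,S_0_4,S_0_5,S_0_6,S_0_7,S_0_8,S_0_9,S_1_1,S_2_1,S_3_1,S_4_1,S_5_1,S_6_1,S_7_1,S_8_1,S_9_1,V0,V1,V2,V3,V4,V5,V6,V7,V8,V9,ee] at h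
    linear_combination h
  have E_2_3_6 : ((-1)*α) * D (Eb 1) 1 + ((-1)*α) * D (Eb 2) 2 + ((-1)) * D (Eb 2) 3 + ((1)) * D (Eb 4) 5 + ((1)*α) * D (Eb 5) 5 = 0 := by
    have h := hs 1 2 5
    simp only [sum10] at h
    norm_num [S_0_2,S_1_0,S_1_1,S_1_2,S_1_3,S_1_4,S_1_5,S_1_6,S_1_7,S_1_8,S_1_9,S_2_2,S_3_2,S_4_2,S_5_2,S_6_2,S_7_2,S_8_2,S_9_2,V0,V1,V2,V3,V4,V5,V6,V7,V8,V9,ee] at h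
    linear_combination h
  have E_2_4_7 : ((-1)*α) * D (Eb 1) 1 + ((-2)) * D (Eb 1) 2 + ((-1)*α) * D (Eb 3) 3 + ((1)) * D (Eb 3) 4 + ((1)) * D (Eb 5) 6 + ((1)*α) * D (Eb 6) 6 = 0 := by
    have h := hs 1 3 6
    simp only [sum10] at h
    norm_num [S_0_3,S_1_0,S_1_1,S_1_2,S_1_3,S_1_4,S_1_5,S_1_6,S_1_7,S_1_8,S_1_9,S_2_3,S_3_3,S_4_3,S_5_3,S_6_3,S_7_3,S_8_3,S_9_3,V0,V1,V2,V3,V4,V5,V6,V7,V8,V9,ee] at h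
    linear_combination h
  have E_2_5_8 : ((1)*β + (-1)*α) * D (Eb 1) 1 + ((-2)) * D (Eb 1) 2 + ((1)*β + (-1)*α) * D (Eb 4) 4 + ((3)) * D (Eb 4) 5 + ((-1)) * D (Eb 6) 7 + ((-1)*β + (1)*α) * D (Eb 7) 7 = 0 := by
    have h := hs 1 4 7
    simp only [sum10] at h
    norm_num [S_0_4,S_1_0,S_1_1,S_1_2,S_1_3,S_1_4,S_1_5,S_1_6,S_1_7,S_1_8,S_1_9,S_2_4,S_3_4,S_4_4,S_5_4,S_6_4,S_7_4,S_8_4,S_9_4,V0,V1,V2,V3,V4,V5,V6,V7,V8,V9,ee] at h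
    linear_combination h
  have E_2_7_10 : ((7/4)*β + (5/4)*α) * D (Eb 1) 1 + ((4)) * D (Eb 1) 2 + ((7/4)*β + (5/4)*α) * D (Eb 6) 6 + ((-2)) * D (Eb 6) 7 + ((-2)) * D (Eb 8) 9 + ((-7/4)*β + (-5/4)*α) * D (Eb 9) 9 = 0 := by
    have h := hs 1 6 9
    simp only [sum10] at h
    norm_num [S_0_6,S_1_0,S_1_1,S_1_2,S_1_3,S_1_4,S_1_5,S_1_6,S_1_7,S_1_8,S_1_9,S_2_6,S_3_6,S_4_6,S_5_6,S_6_6,S_7_6,S_8_6,S_9_6,V0,V1,V2,V3,V4,V5,V6,V7,V8,V9,ee] at h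
    linear_combination h
  have E_3_4_8 : ((-1)*β) * D (Eb 2) 2 + ((-1)*β) * D (Eb 3) 3 + ((-2)) * D (Eb 3) 4 + ((2)) * D (Eb 6) 7 + ((1)*β) * D (Eb 7) 7 = 0 := by
    have h := hs 2 3 7
    simp only [sum10] at h
    norm_num [S_0_3,S_1_3,S_2_0,S_2_1,S_2_2,S_2_3,S_2_4,S_2_5,S_2_6,S_2_7,S_2_8,S_2_9,S_3_3,S_4_3,S_5_3,S_6_3,S_7_3,S_8_3,S_9_3,V0,V1,V2,V3,V4,V5,V6,V7,V8,V9,ee] at h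
    linear_combination h
  have E_3_6_10 : ((1/4)*β + (-9/4)*α) * D (Eb 2) 2 + ((-3)) * D (Eb 2) 3 + ((1/4)*β + (-9/4)*α) * D (Eb 5) 5 + ((4)) * D (Eb 5) 6 + ((-1)) * D (Eb 8) 9 + ((-1/4)*β + (9/4)*α) * D (Eb 9) 9 = 0 := by
    have h := hs 2 5 9
    simp only [sum10] at h
    norm_num [S_0_5,S_1_5,S_2_0,S_2_1,S_2_2,S_2_3,S_2_4,S_2_5,S_2_6,S_2_7,S_2_8,S_2_9,S_3_5,S_4_5,S_5_5,S_6_5,S_7_5,S_8_5,S_9_5,V0,V1,V2,V3,V4,V5,V6,V7,V8,V9,ee] at h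
    linear_combination h
  have E_1_2_5 : ((1)) * D (Eb 0) 2 + ((-1)) * D (Eb 1) 3 + ((1)) * D (Eb 2) 4 = 0 := by
    have h := hs 0 1 4
    simp only [sum10] at h
    norm_num [S_0_0,S_0_1,S_0_2,S_0_3,S_0_4,S_0_5,S_0_6,S_0_7,S_0_8,S_0_9,S_1_1,S_2_1,S_3_1,S_4_1,S_5_1,S_6_1,S_7_1,S_8_1,S_9_1,V0,V1,V2,V3,V4,V5,V6,V7,V8,V9,ee] at h
    linear_combination h
  have E_1_3_5 : ((-1)) * D (Eb 0) 1 + ((-1)) * D (Eb 2) 3 + ((1)) * D (Eb 3) 4 = 0 := by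
    have h := hs 0 2 4
    simp only [sum10] at h
    norm_num [S_0_0,S_0_1,S_0_2,S_0_3,S_0_4,S_0_5,S_0_6,S_0_7,S_0_8,S_0_9,S_1_2,S_2_2,S_3_2,S_4_2,S_5_2,S_6_2,S_7_2,S_8_2,S_9_2,V0,V1,V2,V3,V4,V5,V6,V7,V8,V9,ee] at h
    linear_combination h
  have E_1_3_6 : ((-1)*α) * D (Eb 0) 1 + ((-1)) * D (Eb 2) 4 + ((1)) * D (Eb 3) 5 = 0 := by
    have h := hs 0 2 5
    simp only [sum10] at h
    norm_num [S_0_0,S_0_1,S_0_2,S_0_3,S_0_4,S_0_5,S_0_6,S_0_7,S_0_8,S_0_9,S_1_2,S_2_2,S_3_2,S_4_2,S_5_2,S_6_2,S_7_2,S_8_2,S_9_2,V0,V1,V2,V3,V4,V5,V6,V7,V8,V9,ee] at h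
    linear_combination h
  have E_1_4_6 : ((-1)) * D (Eb 0) 1 + ((-1)) * D (Eb 3) 4 + ((1)) * D (Eb 4) 5 = 0 := by
    have h := hs 0 3 5
    simp only [sum10] at h
    norm_num [S_0_0,S_0_1,S_0_2,S_0_3,S_0_4,S_0_5,S_0_6,S_0_7,S_0_8,S_0_9,S_1_3,S_2_3,S_3_3,S_4_3,S_5_3,S_6_3,S_7_3,S_8_3,S_9_3,V0,V1,V2,V3,V4,V5,V6,V7,V8,V9,ee] at h
    linear_combination h
  have E_1_4_7 : ((-1)*α) * D (Eb 0) 1 + ((-2)) * D (Eb 0) 2 + ((-1)) * D (Eb 3) 5 + ((1)) * D (Eb 4) 6 = 0 := by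
    have h := hs 0 3 6
    simp only [sum10] at h
    norm_num [S_0_0,S_0_1,S_0_2,S_0_3,S_0_4,S_0_5,S_0_6,S_0_7,S_0_8,S_0_9,S_1_3,S_2_3,S_3_3,S_4_3,S_5_3,S_6_3,S_7_3,S_8_3,S_9_3,V0,V1,V2,V3,V4,V5,V6,V7,V8,V9,ee] at h
    linear_combination h
  have E_1_5_7 : ((1)) * D (Eb 0) 1 + ((-1)) * D (Eb 4) 5 + ((1)) * D (Eb 5) 6 = 0 := by
    have h := hs 0 4 6
    simp only [sum10] at h
    norm_num [S_0_0,S_0_1,S_0_2,S_0_3,S_0_4,S_0_5,S_0_6,S_0_7,S_0_8,S_0_9,S_1_4,S_2_4,S_3_4,S_4_4,S_5_4,S_6_4,S_7_4,S_8_4,S_9_4,V0,V1,V2,V3,V4,V5,V6,V7,V8,V9,ee] at h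
    linear_combination h
  have E_1_5_8 : ((1)*β + (-1)*α) * D (Eb 0) 1 + ((-2)) * D (Eb 0) 2 + ((-1)) * D (Eb 4) 6 + ((1)) * D (Eb 5) 7 = 0 := by
    have h := hs 0 4 7
    simp only [sum10] at h
    norm_num [S_0_0,S_0_1,S_0_2,S_0_3,S_0_4,S_0_5,S_0_6,S_0_7,S_0_8,S_0_9,S_1_4,S_2_4,S_3_4,S_4_4,S_5_4,S_6_4,S_7_4,S_8_4,S_9_4,V0,V1,V2,V3,V4,V5,V6,V7,V8,V9,ee] at h
    linear_combination h
  have E_1_6_8 : ((3)) * D (Eb 0) 1 + ((-1)) * D (Eb 5) 6 + ((1)) * D (Eb 6) 7 = 0 := by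
    have h := hs 0 5 7
    simp only [sum10] at h
    norm_num [S_0_0,S_0_1,S_0_2,S_0_3,S_0_4,S_0_5,S_0_6,S_0_7,S_0_8,S_0_9,S_1_5,S_2_5,S_3_5,S_4_5,S_5_5,S_6_5,S_7_5,S_8_5,S_9_5,V0,V1,V2,V3,V4,V5,V6,V7,V8,V9,ee] at h
    linear_combination h
  have E_1_6_9 : ((2)*β + (-1)*α) * D (Eb 0) 1 + ((1)) * D (Eb 0) 2 + ((-1)) * D (Eb 5) 7 + ((1)) * D (Eb 6) 8 = 0 := by
    have h := hs 0 5 8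
    simp only [sum10] at h
    norm_num [S_0_0,S_0_1,S_0_2,S_0_3,S_0_4,S_0_5,S_0_6,S_0_7,S_0_8,S_0_9,S_1_5,S_2_5,S_3_5,S_4_5,S_5_5,S_6_5,S_7_5,S_8_5,S_9_5,V0,V1,V2,V3,V4,V5,V6,V7,V8,V9,ee] at h
    linear_combination h
  have E_1_7_9 : ((2)) * D (Eb 0) 1 + ((-1)) * D (Eb 6) 7 + ((1)) * D (Eb 7) 8 = 0 := by
    have h := hs 0 6 8
    simp only [sum10] at h
    norm_num [S_0_0,S_0_1,S_0_2,S_0_3,S_0_4,S_0_5,S_0_6,S_0_7,S_0_8,S_0_9,S_1_6,S_2_6,S_3_6,S_4_6,S_5_6,S_6_6,S_7_6,S_8_6,S_9_6,V0,V1,V2,V3,V4,V5,V6,V7,V8,V9,ee] at h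
    linear_combination h
  have E_2_3_7 : ((2)) * D (Eb 1) 3 + ((-1)*α) * D (Eb 2) 3 + ((1)) * D (Eb 2) 4 + ((1)) * D (Eb 4) 6 + ((1)*α) * D (Eb 5) 6 = 0 := by
    have h := hs 1 2 6
    simp only [sum10] at h
    norm_num [S_0_2,S_1_0,S_1_1,S_1_2,S_1_3,S_1_4,S_1_5,S_1_6,S_1_7,S_1_8,S_1_9,S_2_2,S_3_2,S_4_2,S_5_2,S_6_2,S_7_2,S_8_2,S_9_2,V0,V1,V2,V3,V4,V5,V6,V7,V8,V9,ee] at h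
    linear_combination h
  have E_3_4_9 : ((3)) * D (Eb 2) 4 + ((-1)*β) * D (Eb 3) 4 + ((1)) * D (Eb 3) 5 + ((2)) * D (Eb 6) 8 + ((1)*β) * D (Eb 7) 8 = 0 := by
    have h := hs 2 3 8
    simp only [sum10] at h
    norm_num [S_0_3,S_1_3,S_2_0,S_2_1,S_2_2,S_2_3,S_2_4,S_2_5,S_2_6,S_2_7,S_2_8,S_2_9,S_3_3,S_4_3,S_5_3,S_6_3,S_7_3,S_8_3,S_9_3,V0,V1,V2,V3,V4,V5,V6,V7,V8,V9,ee] at h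
    linear_combination h
  have Z_1_3 : D (Eb 2) 0 = 0 := by linear_combination ((1)) * E_1_2_1
  have Z_2_3 : D (Eb 2) 1 = 0 := by linear_combination ((1)) * E_1_2_2
  have Z_1_4 : D (Eb 3) 0 = 0 := by linear_combination ((1)) * E_1_3_1
  have Z_2_4 : D (Eb 3) 1 = 0 := by linear_combination ((1)) * E_1_3_2
  have Z_3_4 : D (Eb 3) 2 = 0 := by linear_combination ((1)) * E_1_3_3 + ((1)) * Z_2_3
  have Z_1_5 : D (Eb 4) 0 = 0 := by linear_combination ((1)) * E_1_4_1
  have Z_2_5 : D (Eb 4) 1 = 0 := by linear_combination ((1)) * E_1_4_2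
  have Z_3_5 : D (Eb 4) 2 = 0 := by linear_combination ((1)) * E_1_4_3 + ((1)) * Z_2_4
  have Z_4_5 : D (Eb 4) 3 = 0 := by linear_combination ((1)) * E_1_4_4 + ((1)) * Z_3_4
  have Z_1_6 : D (Eb 5) 0 = 0 := by linear_combination ((1)) * E_1_5_1
  have Z_2_6 : D (Eb 5) 1 = 0 := by linear_combination ((1)) * E_1_5_2
  have Z_3_6 : D (Eb 5) 2 = 0 := by linear_combination ((1)) * E_1_5_3 + ((1)) * Z_2_5
  have Z_4_6 : D (Eb 5) 3 = 0 := by linear_combination ((1)) * E_1_5_4 + ((1)) * Z_3_5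
  have Z_5_6 : D (Eb 5) 4 = 0 := by linear_combination ((1)) * E_1_5_5 + ((1)) * Z_4_5
  have Z_1_7 : D (Eb 6) 0 = 0 := by linear_combination ((1)) * E_1_6_1
  have Z_2_7 : D (Eb 6) 1 = 0 := by linear_combination ((1)) * E_1_6_2
  have Z_3_7 : D (Eb 6) 2 = 0 := by linear_combination ((1)) * E_1_6_3 + ((1)) * Z_2_6
  have Z_4_7 : D (Eb 6) 3 = 0 := by linear_combination ((1)) * E_1_6_4 + ((1)) * Z_3_6
  have Z_5_7 : D (Eb 6) 4 = 0 := by linear_combination ((1)) * E_1_6_5 + ((1)) * Z_4_6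
  have Z_6_7 : D (Eb 6) 5 = 0 := by linear_combination ((1)) * E_1_6_6 + ((1)) * Z_5_6
  have Z_1_8 : D (Eb 7) 0 = 0 := by linear_combination ((1)) * E_1_7_1
  have Z_2_8 : D (Eb 7) 1 = 0 := by linear_combination ((1)) * E_1_7_2
  have Z_3_8 : D (Eb 7) 2 = 0 := by linear_combination ((1)) * E_1_7_3 + ((1)) * Z_2_7
  have Z_4_8 : D (Eb 7) 3 = 0 := by linear_combination ((1)) * E_1_7_4 + ((1)) * Z_3_7
  have Z_5_8 : D (Eb 7) 4 = 0 := by linear_combination ((1)) * E_1_7_5 + ((1)) * Z_4_7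
  have Z_6_8 : D (Eb 7) 5 = 0 := by linear_combination ((1)) * E_1_7_6 + ((1)) * Z_5_7
  have Z_7_8 : D (Eb 7) 6 = 0 := by linear_combination ((1)) * E_1_7_7 + ((1)) * Z_6_7
  have Z_1_9 : D (Eb 8) 0 = 0 := by linear_combination ((1)) * E_1_8_1
  have Z_2_9 : D (Eb 8) 1 = 0 := by linear_combination ((1)) * E_1_8_2
  have Z_3_9 : D (Eb 8) 2 = 0 := by linear_combination ((1)) * E_1_8_3 + ((1)) * Z_2_8
  have Z_4_9 : D (Eb 8) 3 = 0 := by linear_combination ((1)) * E_1_8_4 + ((1)) * Z_3_8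
  have Z_5_9 : D (Eb 8) 4 = 0 := by linear_combination ((1)) * E_1_8_5 + ((1)) * Z_4_8
  have Z_6_9 : D (Eb 8) 5 = 0 := by linear_combination ((1)) * E_1_8_6 + ((1)) * Z_5_8
  have Z_7_9 : D (Eb 8) 6 = 0 := by linear_combination ((1)) * E_1_8_7 + ((1)) * Z_6_8
  have Z_8_9 : D (Eb 8) 7 = 0 := by linear_combination ((1)) * E_1_8_8 + ((1)) * Z_7_8
  have Z_1_10 : D (Eb 9) 0 = 0 := by linear_combination ((1)) * E_1_9_1
  have Z_2_10 : D (Eb 9) 1 = 0 := by linear_combination ((1)) * E_1_9_2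
  have Z_3_10 : D (Eb 9) 2 = 0 := by linear_combination ((1)) * E_1_9_3 + ((1)) * Z_2_9
  have Z_4_10 : D (Eb 9) 3 = 0 := by linear_combination ((1)) * E_1_9_4 + ((1)) * Z_3_9
  have Z_5_10 : D (Eb 9) 4 = 0 := by linear_combination ((1)) * E_1_9_5 + ((1)) * Z_4_9
  have Z_6_10 : D (Eb 9) 5 = 0 := by linear_combination ((1)) * E_1_9_6 + ((1)) * Z_5_9
  have Z_7_10 : D (Eb 9) 6 = 0 := by linear_combination ((1)) * E_1_9_7 + ((1)) * Z_6_9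
  have Z_8_10 : D (Eb 9) 7 = 0 := by linear_combination ((1)) * E_1_9_8 + ((1)) * Z_7_9
  have Z_9_10 : D (Eb 9) 8 = 0 := by linear_combination ((1)) * E_1_9_9 + ((1)) * Z_8_9
  have Z_1_2 : D (Eb 1) 0 = 0 := by linear_combination ((-1)) * E_2_3_4 + ((1)) * Z_4_5 + ((1)*α) * Z_4_6
  have Hd_2 : D (Eb 1) 1 = 2 * D (Eb 0) 0 := by linear_combination ((1)) * E_1_4_5 + ((1)) * E_1_3_4 + ((-1)) * E_2_3_5 + ((1)*α) * Z_5_6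
  have Hd_3 : D (Eb 2) 2 = 3 * D (Eb 0) 0 := by linear_combination ((1)) * E_1_2_3 + ((1)) * Hd_2
  have Hd_4 : D (Eb 3) 3 = 4 * D (Eb 0) 0 := by linear_combination ((1)) * E_1_3_4 + ((1)) * Hd_3
  have Hd_5 : D (Eb 4) 4 = 5 * D (Eb 0) 0 := by linear_combination ((1)) * E_1_4_5 + ((1)) * Hd_4
  have Hd_6 : D (Eb 5) 5 = 6 * D (Eb 0) 0 := by linear_combination ((1)) * E_1_5_6 + ((1)) * Hd_5
  have Hd_7 : D (Eb 6) 6 = 7 * D (Eb 0) 0 := by linear_combination ((1)) * E_1_6_7 + ((1)) * Hd_6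
  have Hd_8 : D (Eb 7) 7 = 8 * D (Eb 0) 0 := by linear_combination ((1)) * E_1_7_8 + ((1)) * Hd_7
  have Hd_9 : D (Eb 8) 8 = 9 * D (Eb 0) 0 := by linear_combination ((1)) * E_1_8_9 + ((1)) * Hd_8
  have Hd_10 : D (Eb 9) 9 = 10 * D (Eb 0) 0 := by linear_combination ((1)) * E_1_9_10 + ((1)) * Hd_9
  have ht : D (Eb 0) 0 = 0 := by
    by_cases h3 : 3*α + β = 0
    · have hb : β = -3*α := by linarith
      subst hb
      have hα : α ≠ 0 := by
        intro h0; exact hαβ (by rw [h0]; norm_num)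
      have h2 : α^2 * D (Eb 0) 0 = 0 := by linear_combination ((4/25)) * E_1_2_5 + ((-27/25)*α) * E_1_3_5 + ((2/25)) * E_1_3_6 + ((-31/25)*α) * E_1_4_6 + ((2/75)) * E_1_4_7 + ((-6/25)*α) * E_1_5_7 + ((8/75)) * E_1_5_8 + ((-4/25)*α) * E_1_6_8 + ((8/75)) * E_1_6_9 + ((-4/25)*α) * E_1_7_9 + ((1)*α) * E_2_3_6 + ((2/25)) * E_2_3_7 + ((-4/75)) * E_3_4_9 + ((1)*α^2) * Hd_2 + ((1)*α^2) * Hd_3 + ((-1)*α^2) * Hd_6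
      rcases mul_eq_zero.mp h2 with h|h
      · exact absurd (pow_eq_zero_iff (by norm_num)|>.mp h) hα
      · exact h
    · have h2 : (3*α + β) * D (Eb 0) 0 = 0 := by linear_combination ((96/13)) * E_1_2_4 + ((72/13)) * E_2_3_6 + ((-32/13)) * E_2_4_7 + ((-24/13)) * E_2_5_8 + ((-4/13)) * E_2_7_10 + ((-16/13)) * E_3_4_8 + ((8/13)) * E_3_6_10 + ((31/13)*β + (21/13)*α) * Hd_2 + ((-18/13)*β + (90/13)*α) * Hd_3 + ((-16/13)*β + (-32/13)*α) * Hd_4 + ((24/13)*β + (-24/13)*α) * Hd_5 + ((-2/13)*β + (-54/13)*α) * Hd_6 + ((7/13)*β + (37/13)*α) * Hd_7 + ((-8/13)*β + (24/13)*α) * Hd_8 + ((-5/13)*β + (-23/13)*α) * Hd_10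
      exact (mul_eq_zero.mp h2).resolve_left h3
  have Hz_1 : D (Eb 0) 0 = 0 := ht
  have Hz_2 : D (Eb 1) 1 = 0 := by rw [Hd_2, ht, mul_zero]
  have Hz_3 : D (Eb 2) 2 = 0 := by rw [Hd_3, ht, mul_zero]
  have Hz_4 : D (Eb 3) 3 = 0 := by rw [Hd_4, ht, mul_zero]
  have Hz_5 : D (Eb 4) 4 = 0 := by rw [Hd_5, ht, mul_zero]
  have Hz_6 : D (Eb 5) 5 = 0 := by rw [Hd_6, ht, mul_zero]
  have Hz_7 : D (Eb 6) 6 = 0 := by rw [Hd_7, ht, mul_zero]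
  have Hz_8 : D (Eb 7) 7 = 0 := by rw [Hd_8, ht, mul_zero]
  have Hz_9 : D (Eb 8) 8 = 0 := by rw [Hd_9, ht, mul_zero]
  have Hz_10 : D (Eb 9) 9 = 0 := by rw [Hd_10, ht, mul_zero]
  have hzero : ∀ j i : Fin 10, i ≤ j → D (Eb j) i = 0 := by
    intro j i hij
    fin_cases j <;> fin_cases i
    · exact Hz_1
    · exact absurd hij (by decide)
    · exact absurd hij (by decide)
    · exact absurd hij (by decide)
    · exact absurd hij (by decide)
    · exact absurd hij (by decide)
    · exact absurd hij (by decide)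
    · exact absurd hij (by decide)
    · exact absurd hij (by decide)
    · exact absurd hij (by decide)
    · exact Z_1_2
    · exact Hz_2
    · exact absurd hij (by decide)
    · exact absurd hij (by decide)
    · exact absurd hij (by decide)
    · exact absurd hij (by decide)
    · exact absurd hij (by decide)
    · exact absurd hij (by decide)
    · exact absurd hij (by decide)
    · exact absurd hij (by decide)
    · exact Z_1_3
    · exact Z_2_3
    · exact Hz_3
    · exact absurd hij (by decide)
    · exact absurd hij (by decide)
    · exact absurd hij (by decide)
    · exact absurd hij (by decide)
    · exact absurd hij (by decide)
    · exact absurd hij (by decide)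
    · exact absurd hij (by decide)
    · exact Z_1_4
    · exact Z_2_4
    · exact Z_3_4
    · exact Hz_4
    · exact absurd hij (by decide)
    · exact absurd hij (by decide)
    · exact absurd hij (by decide)
    · exact absurd hij (by decide)
    · exact absurd hij (by decide)
    · exact absurd hij (by decide)
    · exact Z_1_5
    · exact Z_2_5
    · exact Z_3_5
    · exact Z_4_5
    · exact Hz_5
    · exact absurd hij (by decide)
    · exact absurd hij (by decide)
    · exact absurd hij (by decide)
    · exact absurd hij (by decide)
    · exact absurd hij (by decide)
    · exact Z_1_6
    · exact Z_2_6
    · exact Z_3_6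
    · exact Z_4_6
    · exact Z_5_6
    · exact Hz_6
    · exact absurd hij (by decide)
    · exact absurd hij (by decide)
    · exact absurd hij (by decide)
    · exact absurd hij (by decide)
    · exact Z_1_7
    · exact Z_2_7
    · exact Z_3_7
    · exact Z_4_7
    · exact Z_5_7
    · exact Z_6_7
    · exact Hz_7
    · exact absurd hij (by decide)
    · exact absurd hij (by decide)
    · exact absurd hij (by decide)
    · exact Z_1_8
    · exact Z_2_8
    · exact Z_3_8
    · exact Z_4_8
    · exact Z_5_8
    · exact Z_6_8
    · exact Z_7_8
    · exact Hz_8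
    · exact absurd hij (by decide)
    · exact absurd hij (by decide)
    · exact Z_1_9
    · exact Z_2_9
    · exact Z_3_9
    · exact Z_4_9
    · exact Z_5_9
    · exact Z_6_9
    · exact Z_7_9
    · exact Z_8_9
    · exact Hz_9
    · exact absurd hij (by decide)
    · exact Z_1_10
    · exact Z_2_10
    · exact Z_3_10
    · exact Z_4_10
    · exact Z_5_10
    · exact Z_6_10
    · exact Z_7_10
    · exact Z_8_10
    · exact Z_9_10
    · exact Hz_10
  refine ⟨hzero, ?_⟩
  have step : ∀ (x : Fin 10 → ℝ) (k : ℕ), (∀ j : Fin 10, (j:ℕ) < k → x j = 0) →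
      ∀ i : Fin 10, (i:ℕ) < k+1 → D x i = 0 := by
    intro x k hx i hi
    rw [key]
    apply Finset.sum_eq_zero
    intro j _
    by_cases hj : (j:ℕ) < k
    · rw [hx j hj, zero_mul]
    · rw [hzero j i (by rw [Fin.le_def]; omega), mul_zero]
  have iter : ∀ (k : ℕ) (x : Fin 10 → ℝ) (i : Fin 10), (i:ℕ) < k → (D^k) x i = 0 := by
    intro k
    induction k with
    | zero => intro x i hi; omega
    | succ n ih =>
      intro x i hi
      have hpw : (D^(n+1)) x = D ((D^n) x) := by rw [pow_succ']; rfl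
      rw [hpw]
      exact step _ n (fun j hj => ih x j hj) i hi
  exact ⟨10, LinearMap.ext fun x => funext fun i => iter 10 x i i.isLt⟩

end
end
end

section
/- For (α,β) = (0,0), the quotient Lie algebra q(0,0) = g(0,0)/span(e_11) admits the invertible derivation D = diag(1,2,…,10) (D(e_i) = i·e_i for the induced basis), hence q(0,0) is not characteristically nilpotent. -/
noncomputable section

set_option maxHeartbeats 1600000 in
lemma key10 (i j k : Fin 10) :
    ((k:ℕ)+1 : ℝ) * sc 10 0 0 i j k = (((i:ℕ)+1:ℝ) + ((j:ℕ)+1)) * sc 10 0 0 i j k := by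
  fin_cases i <;> fin_cases j <;>
    simp only [sc, cc, ee, Fin.isValue] <;>
    norm_num <;>
    (refine or_iff_not_imp_right.2 fun h => ?_) <;>
    (simp only [ee, ite_eq_right_iff, not_forall] at h) <;>
    exact_mod_cast h.1

def Dmap : (Fin 10 → ℝ) →ₗ[ℝ] (Fin 10 → ℝ) where
  toFun x := fun i => ((i : ℕ) + 1 : ℝ) * x i
  map_add' x y := by funext i; simp [mul_add]
  map_smul' c x := by funext i; simp [smul_eq_mul]; ring

/-- For `(α,β) = (0,0)`, the quotient `q(0,0) = g(0,0)/ℝe₁₁` admits the invertible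
derivation `D = diag(1,2,…,10)`, i.e. `D(e_i) = i • e_i`; hence `q(0,0)` is not
characteristically nilpotent. -/
theorem quotient_zero_not_char_nilpotent :
    ∃ D : (Fin 10 → ℝ) →ₗ[ℝ] (Fin 10 → ℝ),
      (∀ (x : Fin 10 → ℝ) (i : Fin 10), D x i = ((i : ℕ) + 1 : ℝ) * x i) ∧
      (∀ x y : Fin 10 → ℝ, D (br 10 0 0 x y) = br 10 0 0 (D x) y + br 10 0 0 x (D y)) ∧
      Function.Bijective D ∧ ¬ IsNilpotent D := by
  refine ⟨Dmap, fun x i => rfl, ?_, ?_, ?_⟩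
  · intro x y
    funext k
    show ((k:ℕ) + 1 : ℝ) * br 10 0 0 x y k = _
    simp only [br, Finset.sum_apply, Pi.smul_apply, smul_eq_mul, Finset.mul_sum,
      Pi.add_apply]
    rw [← Finset.sum_add_distrib]
    refine Finset.sum_congr rfl fun i _ => ?_
    rw [← Finset.sum_add_distrib]
    refine Finset.sum_congr rfl fun j _ => ?_
    show _ = ((i:ℕ)+1:ℝ) * x i * y j * sc 10 0 0 i j k
      + x i * (((j:ℕ)+1:ℝ) * y j) * sc 10 0 0 i j k
    linear_combination (x i * y j) * key10 i j k
  · rw [Function.bijective_iff_has_inverse]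
    refine ⟨fun x i => x i / ((i:ℕ) + 1 : ℝ), fun x => ?_, fun x => ?_⟩
    · funext i
      show Dmap x i / ((i:ℕ) + 1 : ℝ) = x i
      have h : ((i:ℕ) + 1 : ℝ) ≠ 0 := by positivity
      rw [show Dmap x i = ((i:ℕ) + 1 : ℝ) * x i from rfl]
      field_simp
    · funext i
      show ((i:ℕ) + 1 : ℝ) * (x i / ((i:ℕ) + 1 : ℝ)) = x i
      have h : ((i:ℕ) + 1 : ℝ) ≠ 0 := by positivity
      field_simp
  · rintro ⟨n, hn⟩
    have hpow : ∀ m : ℕ, ∀ x : Fin 10 → ℝ, (Dmap ^ m) x 0 = x 0 := by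
      intro m
      induction m with
      | zero => intro x; simp
      | succ p ih =>
        intro x
        rw [pow_succ, Module.End.mul_apply, ih]
        show ((0:ℕ) + 1 : ℝ) * x 0 = x 0
        simp
    have h1 : (Dmap ^ n) (fun _ => (1:ℝ)) 0 = 1 := hpow n _
    rw [hn] at h1
    simp at h1
end
end
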